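/- arXiv:2605.17383 — 3 statements merged into one kernel-verified Lean document; each statement's English description precedes it below -/
import Mathlib

section
/- Let G be strongly C4-free and suppose G contains a walk u − x1 − x2 − v where x1, x2 are distinct vertices of degree 2 in G, both different from u and v (u = v allowed). Let G' be obtained from G by deleting x1, x2 and adding the edge {u,v} (a loop if u = v). Then gap(G) ≤ gap(G'), and if G' is also strongly C4-free then gap(G) = gap(G'). -/
structure LoopGraph (V : Type*) where
  Adj : V → V → Prop
  symm : ∀ u v, Adj u v → Adj v u

namespace LoopGraph

variable {V : Type*} [Fintype V] [DecidableEq V]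

/-- `C` is a set-join cover of `G`: a finite family of set-joins `K ∨ L`
(with `K`, `L` nonempty) whose edge sets union to `E(G)`. -/
def IsCover (G : LoopGraph V) (C : Finset (Finset V × Finset V)) : Prop :=
  (∀ p ∈ C, p.1.Nonempty ∧ p.2.Nonempty) ∧
  (∀ u v : V, G.Adj u v ↔ ∃ p ∈ C, (u ∈ p.1 ∧ v ∈ p.2) ∨ (u ∈ p.2 ∧ v ∈ p.1))

/-- The component set of a set-join cover: all sets occurring as a part. -/
def sjComponents (C : Finset (Finset V × Finset V)) : Finset (Finset V) :=
  C.image Prod.fst ∪ C.image Prod.snd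

/-- The SNT-rank: minimal number of distinct components over all set-join covers. -/
noncomputable def stp (G : LoopGraph V) : ℕ :=
  sInf {n | ∃ C : Finset (Finset V × Finset V), G.IsCover C ∧ (sjComponents C).card = n}

/-- `gap G = |V(G)| - stp G`. -/
noncomputable def gap (G : LoopGraph V) : ℕ :=
  Fintype.card V - G.stp

/-- No vertices `u₁ ≠ u₂`, `v₁ ≠ v₂` with all four pairs `{uᵢ, vⱼ}` edges. -/
def StronglyC4Free (G : LoopGraph V) : Prop :=
  ¬ ∃ u₁ u₂ v₁ v₂ : V, u₁ ≠ u₂ ∧ v₁ ≠ v₂ ∧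
    G.Adj u₁ v₁ ∧ G.Adj u₁ v₂ ∧ G.Adj u₂ v₁ ∧ G.Adj u₂ v₂

/-- Induced subgraph on a finset of vertices. -/
def induce (G : LoopGraph V) (s : Finset V) : LoopGraph {x // x ∈ s} :=
  ⟨fun a b => G.Adj a b, fun _ _ h => G.symm _ _ h⟩

/-- Degree of a vertex; a loop counts twice. -/
noncomputable def deg (G : LoopGraph V) (x : V) : ℕ :=
  {y | G.Adj x y}.ncard + {y | y = x ∧ G.Adj x y}.ncard

end LoopGraph

open LoopGraph

/-- The graph obtained from `G` by deleting `x₁, x₂` and adding the edge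
`{u, v}` (a loop if `u = v`). -/
def modGraph {V : Type*} [DecidableEq V] [Fintype V] (G : LoopGraph V) (u v x₁ x₂ : V) :
    LoopGraph {x // x ∈ ({x₁, x₂}ᶜ : Finset V)} where
  Adj a b := G.Adj a.1 b.1 ∨ (a.1 = u ∧ b.1 = v) ∨ (a.1 = v ∧ b.1 = u)
  symm := by
    rintro a b (h | h | h)
    · exact Or.inl (G.symm _ _ h)
    · exact Or.inr (Or.inr ⟨h.2, h.1⟩)
    · exact Or.inr (Or.inl ⟨h.2, h.1⟩)

set_option linter.unusedSectionVars false
set_option maxHeartbeats 1000000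

namespace Stmt9

variable {V : Type*} [Fintype V] [DecidableEq V]

def cro (p : Finset V × Finset V) (a b : V) : Prop :=
  (a ∈ p.1 ∧ b ∈ p.2) ∨ (a ∈ p.2 ∧ b ∈ p.1)

lemma cro_symm {p : Finset V × Finset V} {a b : V} (h : cro p a b) : cro p b a := by
  rcases h with ⟨h1,h2⟩|⟨h1,h2⟩
  · exact Or.inr ⟨h2,h1⟩
  · exact Or.inl ⟨h2,h1⟩

lemma mem_sjComponents {C : Finset (Finset V × Finset V)} {S : Finset V} :
    S ∈ sjComponents C ↔ ∃ p ∈ C, p.1 = S ∨ p.2 = S := by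
  unfold LoopGraph.sjComponents
  simp only [Finset.mem_union, Finset.mem_image]
  constructor
  · rintro (⟨p,hp,rfl⟩|⟨p,hp,rfl⟩)
    · exact ⟨p, hp, Or.inl rfl⟩
    · exact ⟨p, hp, Or.inr rfl⟩
  · rintro ⟨p,hp, rfl|rfl⟩
    · exact Or.inl ⟨p,hp,rfl⟩
    · exact Or.inr ⟨p,hp,rfl⟩

lemma sjComponents_subset {C C' : Finset (Finset V × Finset V)} (h : C ⊆ C') :
    sjComponents C ⊆ sjComponents C' := by
  intro S hS
  rw [mem_sjComponents] at hS ⊢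
  obtain ⟨p,hp,h2⟩ := hS
  exact ⟨p, h hp, h2⟩

lemma sjComponents_union (C C' : Finset (Finset V × Finset V)) :
    sjComponents (C ∪ C') = sjComponents C ∪ sjComponents C' := by
  ext S
  simp only [mem_sjComponents, Finset.mem_union]
  constructor
  · rintro ⟨p, hp|hp, h2⟩
    · exact Or.inl ⟨p,hp,h2⟩
    · exact Or.inr ⟨p,hp,h2⟩
  · rintro (⟨p,hp,h2⟩|⟨p,hp,h2⟩)
    · exact ⟨p, Or.inl hp, h2⟩
    · exact ⟨p, Or.inr hp, h2⟩

lemma sjComponents_pairimage {W : Type*} [DecidableEq W] (m : Finset V → Finset W)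
    (C : Finset (Finset V × Finset V)) :
    sjComponents (C.image fun p => (m p.1, m p.2)) = (sjComponents C).image m := by
  unfold LoopGraph.sjComponents
  rw [Finset.image_union, Finset.image_image, Finset.image_image, Finset.image_image,
    Finset.image_image]
  rfl

structure Facts (G : LoopGraph V) (u v x₁ x₂ : V) : Prop where
  hx : x₁ ≠ x₂
  hx₁u : x₁ ≠ u
  hx₁v : x₁ ≠ v
  hx₂u : x₂ ≠ u
  hx₂v : x₂ ≠ v
  a1 : G.Adj u x₁
  a2 : G.Adj x₁ x₂
  a3 : G.Adj x₂ v
  n1 : ∀ y, G.Adj x₁ y ↔ y = u ∨ y = x₂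
  n2 : ∀ y, G.Adj x₂ y ↔ y = x₁ ∨ y = v
  nuv : ¬ G.Adj u v

lemma nbhd_of_deg (G : LoopGraph V) {x a b : V} (hab : a ≠ b) (hxa : x ≠ a) (hxb : x ≠ b)
    (ha : G.Adj x a) (hb : G.Adj x b) (hd : G.deg x = 2) : ∀ y, G.Adj x y ↔ y = a ∨ y = b := by
  unfold LoopGraph.deg at hd
  have hfin : {y | G.Adj x y}.Finite := Set.toFinite _
  have hnl : ¬ G.Adj x x := by
    intro hl
    have hsub : ({x, a, b} : Set V) ⊆ {y | G.Adj x y} := by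
      intro y hy
      rcases hy with rfl|rfl|rfl
      · exact hl
      · exact ha
      · exact hb
    have h3 : ({x, a, b} : Set V).ncard = 3 := by
      rw [Set.ncard_insert_of_notMem (by simp [hxa, hxb]) (Set.toFinite _), Set.ncard_pair hab]
    have hge : 3 ≤ {y | G.Adj x y}.ncard := by
      rw [← h3]; exact Set.ncard_le_ncard hsub hfin
    omega
  have hT : {y | y = x ∧ G.Adj x y} = ∅ := by
    ext y
    simp only [Set.mem_setOf_eq, Set.mem_empty_iff_false, iff_false, not_and]
    rintro rfl; exact hnl
  rw [hT, Set.ncard_empty] at hd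
  have hsub : ({a, b} : Set V) ⊆ {y | G.Adj x y} := by
    intro y hy
    rcases hy with rfl|rfl
    · exact ha
    · exact hb
  have heq : ({a, b} : Set V) = {y | G.Adj x y} := by
    apply Set.eq_of_subset_of_ncard_le hsub _ hfin
    rw [Set.ncard_pair hab]; omega
  intro y
  constructor
  · intro hy
    have : y ∈ ({a, b} : Set V) := by rw [heq]; exact hy
    simpa using this
  · rintro (rfl|rfl)
    · exact ha
    · exact hb

lemma facts_mk (G : LoopGraph V) (hG : G.StronglyC4Free) (u v x₁ x₂ : V)
    (hx : x₁ ≠ x₂) (hx₁u : x₁ ≠ u) (hx₁v : x₁ ≠ v) (hx₂u : x₂ ≠ u) (hx₂v : x₂ ≠ v)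
    (h1 : G.Adj u x₁) (h2 : G.Adj x₁ x₂) (h3 : G.Adj x₂ v)
    (hd1 : G.deg x₁ = 2) (hd2 : G.deg x₂ = 2) : Facts G u v x₁ x₂ := by
  refine ⟨hx, hx₁u, hx₁v, hx₂u, hx₂v, h1, h2, h3, ?_, ?_, ?_⟩
  · exact nbhd_of_deg G (Ne.symm hx₂u) hx₁u hx (G.symm _ _ h1) h2 hd1
  · exact nbhd_of_deg G hx₁v (Ne.symm hx) hx₂v (G.symm _ _ h2) h3 hd2
  · intro hadj
    exact hG ⟨u, x₂, x₁, v, Ne.symm hx₂u, hx₁v, h1, hadj, G.symm _ _ h2, h3⟩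

def A2 (G : LoopGraph V) (u v a b : V) : Prop :=
  G.Adj a b ∨ (a = u ∧ b = v) ∨ (a = v ∧ b = u)

def VCover (G : LoopGraph V) (u v x₁ x₂ : V) (D : Finset (Finset V × Finset V)) : Prop :=
  (∀ p ∈ D, p.1.Nonempty ∧ p.2.Nonempty) ∧
  (∀ p ∈ D, ∀ y, (y ∈ p.1 ∨ y ∈ p.2) → y ≠ x₁ ∧ y ≠ x₂) ∧
  (∀ a b, a ≠ x₁ → a ≠ x₂ → b ≠ x₁ → b ≠ x₂ → (A2 G u v a b ↔ ∃ p ∈ D, cro p a b))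

lemma stp_le_of_vcover (G : LoopGraph V) {u v x₁ x₂ : V} {D : Finset (Finset V × Finset V)}
    (hD : VCover G u v x₁ x₂ D) :
    (modGraph G u v x₁ x₂).stp ≤ (sjComponents D).card := by
  classical
  set cpl : Finset V := ({x₁, x₂}ᶜ : Finset V) with hcpl
  have hmemcpl : ∀ y : V, y ≠ x₁ → y ≠ x₂ → y ∈ cpl := by
    intro y hy1 hy2
    simp [hcpl, Finset.mem_compl, Finset.mem_insert, hy1, hy2]
  have hne : ∀ y : V, y ∈ cpl → y ≠ x₁ ∧ y ≠ x₂ := by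
    intro y hy
    simp only [hcpl, Finset.mem_compl, Finset.mem_insert, Finset.mem_singleton] at hy
    push_neg at hy
    exact hy
  set f : Finset V → Finset {x // x ∈ cpl} := fun S => S.subtype (· ∈ cpl) with hf
  set C₂ := D.image (fun p => (f p.1, f p.2)) with hC₂
  have hcov : (modGraph G u v x₁ x₂).IsCover C₂ := by
    constructor
    · rintro p hp
      simp only [hC₂, Finset.mem_image] at hp
      obtain ⟨q, hq, rfl⟩ := hp
      obtain ⟨⟨y1, hy1⟩, ⟨y2, hy2⟩⟩ := hD.1 q hq
      have av1 := hD.2.1 q hq y1 (Or.inl hy1)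
      have av2 := hD.2.1 q hq y2 (Or.inr hy2)
      constructor
      · exact ⟨⟨y1, hmemcpl _ av1.1 av1.2⟩, by simp [hf, Finset.mem_subtype, hy1]⟩
      · exact ⟨⟨y2, hmemcpl _ av2.1 av2.2⟩, by simp [hf, Finset.mem_subtype, hy2]⟩
    · intro a b
      obtain ⟨ha1, ha2⟩ := hne a.1 a.2
      obtain ⟨hb1, hb2⟩ := hne b.1 b.2
      have hadj : (modGraph G u v x₁ x₂).Adj a b ↔ A2 G u v a.1 b.1 := Iff.rfl
      rw [hadj, hD.2.2 a.1 b.1 ha1 ha2 hb1 hb2]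
      constructor
      · rintro ⟨p, hp, hcr⟩
        refine ⟨(f p.1, f p.2), Finset.mem_image_of_mem _ hp, ?_⟩
        rcases hcr with ⟨h1, h2⟩ | ⟨h1, h2⟩
        · exact Or.inl ⟨by simpa [hf, Finset.mem_subtype] using h1,
            by simpa [hf, Finset.mem_subtype] using h2⟩
        · exact Or.inr ⟨by simpa [hf, Finset.mem_subtype] using h1,
            by simpa [hf, Finset.mem_subtype] using h2⟩
      · rintro ⟨p, hp, hcr⟩
        simp only [hC₂, Finset.mem_image] at hp
        obtain ⟨q, hq, rfl⟩ := hp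
        refine ⟨q, hq, ?_⟩
        rcases hcr with ⟨h1, h2⟩ | ⟨h1, h2⟩
        · exact Or.inl ⟨by simpa [hf, Finset.mem_subtype] using h1,
            by simpa [hf, Finset.mem_subtype] using h2⟩
        · exact Or.inr ⟨by simpa [hf, Finset.mem_subtype] using h1,
            by simpa [hf, Finset.mem_subtype] using h2⟩
  have h1 : (modGraph G u v x₁ x₂).stp ≤ (sjComponents C₂).card :=
    Nat.sInf_le ⟨C₂, hcov, rfl⟩
  have h2 : (sjComponents C₂).card ≤ (sjComponents D).card := by
    rw [hC₂, sjComponents_pairimage]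
    exact Finset.card_image_le
  omega

lemma vcover_of_cover (G : LoopGraph V) {u v x₁ x₂ : V} {C₂ : Finset (Finset {x // x ∈ ({x₁, x₂}ᶜ : Finset V)} × Finset {x // x ∈ ({x₁, x₂}ᶜ : Finset V)})}
    (hC₂ : (modGraph G u v x₁ x₂).IsCover C₂) :
    ∃ D : Finset (Finset V × Finset V), VCover G u v x₁ x₂ D ∧
      (sjComponents D).card ≤ (sjComponents C₂).card := by
  classical
  have hne : ∀ y : V, y ∈ ({x₁, x₂}ᶜ : Finset V) → y ≠ x₁ ∧ y ≠ x₂ := by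
    intro y hy
    simp only [Finset.mem_compl, Finset.mem_insert, Finset.mem_singleton] at hy
    push_neg at hy
    exact hy
  have hmemcpl : ∀ y : V, y ≠ x₁ → y ≠ x₂ → y ∈ ({x₁, x₂}ᶜ : Finset V) := by
    intro y hy1 hy2
    simp [Finset.mem_compl, Finset.mem_insert, hy1, hy2]
  have hmemg : ∀ (s : Finset {x // x ∈ ({x₁, x₂}ᶜ : Finset V)}) (y : V),
      y ∈ s.image Subtype.val ↔ ∃ hy : y ∈ ({x₁, x₂}ᶜ : Finset V), (⟨y, hy⟩ : {x // x ∈ ({x₁, x₂}ᶜ : Finset V)}) ∈ s := by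
    intro s y
    simp only [Finset.mem_image]
    constructor
    · rintro ⟨a, ha, rfl⟩
      exact ⟨a.2, ha⟩
    · rintro ⟨hy, h⟩
      exact ⟨⟨y, hy⟩, h, rfl⟩
  refine ⟨C₂.image (fun p => (p.1.image Subtype.val, p.2.image Subtype.val)), ⟨?_, ?_, ?_⟩, ?_⟩
  · rintro p hp
    simp only [Finset.mem_image] at hp
    obtain ⟨q, hq, rfl⟩ := hp
    obtain ⟨⟨y1, hy1⟩, ⟨y2, hy2⟩⟩ := hC₂.1 q hq
    exact ⟨⟨y1.1, Finset.mem_image_of_mem _ hy1⟩, ⟨y2.1, Finset.mem_image_of_mem _ hy2⟩⟩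
  · rintro p hp y hy
    simp only [Finset.mem_image] at hp
    obtain ⟨q, hq, rfl⟩ := hp
    rcases hy with hy | hy <;>
    · rw [hmemg] at hy
      obtain ⟨hyc, _⟩ := hy
      exact hne y hyc
  · intro a b ha1 ha2 hb1 hb2
    have ha : a ∈ ({x₁, x₂}ᶜ : Finset V) := hmemcpl a ha1 ha2
    have hb : b ∈ ({x₁, x₂}ᶜ : Finset V) := hmemcpl b hb1 hb2
    have hadj : A2 G u v a b ↔ (modGraph G u v x₁ x₂).Adj ⟨a, ha⟩ ⟨b, hb⟩ := Iff.rfl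
    rw [hadj, hC₂.2 ⟨a, ha⟩ ⟨b, hb⟩]
    constructor
    · rintro ⟨p, hp, hcr⟩
      refine ⟨(p.1.image Subtype.val, p.2.image Subtype.val), Finset.mem_image_of_mem _ hp, ?_⟩
      rcases hcr with ⟨h1, h2⟩ | ⟨h1, h2⟩
      · exact Or.inl ⟨(hmemg _ _).2 ⟨ha, h1⟩, (hmemg _ _).2 ⟨hb, h2⟩⟩
      · exact Or.inr ⟨(hmemg _ _).2 ⟨ha, h1⟩, (hmemg _ _).2 ⟨hb, h2⟩⟩
    · rintro ⟨p, hp, hcr⟩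
      simp only [Finset.mem_image] at hp
      obtain ⟨q, hq, rfl⟩ := hp
      refine ⟨q, hq, ?_⟩
      rcases hcr with ⟨h1, h2⟩ | ⟨h1, h2⟩
      · rw [hmemg] at h1 h2
        exact Or.inl ⟨h1.2, h2.2⟩
      · rw [hmemg] at h1 h2
        exact Or.inr ⟨h1.2, h2.2⟩
  · rw [sjComponents_pairimage]
    exact Finset.card_image_le

lemma stp_attained (G : LoopGraph V) : ∃ C, G.IsCover C ∧ (sjComponents C).card = G.stp := by
  classical
  have hne : {n | ∃ C : Finset (Finset V × Finset V), G.IsCover C ∧ (sjComponents C).card = n}.Nonempty := by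
    refine ⟨_, ⟨((Finset.univ : Finset (V × V)).filter (fun q => G.Adj q.1 q.2)).image
      (fun q => ({q.1}, {q.2})), ⟨?_, ?_⟩, rfl⟩⟩
    · rintro p hp
      simp only [Finset.mem_image] at hp
      obtain ⟨q, _, rfl⟩ := hp
      exact ⟨⟨q.1, Finset.mem_singleton_self _⟩, ⟨q.2, Finset.mem_singleton_self _⟩⟩
    · intro a b
      constructor
      · intro hab
        refine ⟨({a}, {b}), ?_, Or.inl ⟨Finset.mem_singleton_self _, Finset.mem_singleton_self _⟩⟩
        have hm : (a, b) ∈ (Finset.univ : Finset (V × V)).filter (fun q => G.Adj q.1 q.2) := by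
          simp only [Finset.mem_filter, Finset.mem_univ, true_and]
          exact hab
        exact Finset.mem_image_of_mem _ hm
      · rintro ⟨p, hp, hcr⟩
        simp only [Finset.mem_image, Finset.mem_filter] at hp
        obtain ⟨q, ⟨_, hq⟩, rfl⟩ := hp
        rcases hcr with ⟨h1, h2⟩ | ⟨h1, h2⟩ <;>
          simp only [Finset.mem_singleton] at h1 h2 <;> subst h1 <;> subst h2
        · exact hq
        · exact G.symm _ _ hq
  obtain ⟨C, hC, hcard⟩ := Nat.sInf_mem hne
  exact ⟨C, hC, hcard⟩

lemma a2_sc4 (G : LoopGraph V) {u v x₁ x₂ : V}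
    (hsc : (modGraph G u v x₁ x₂).StronglyC4Free) :
    ∀ a₁ a₂ b₁ b₂ : V, a₁ ≠ x₁ → a₁ ≠ x₂ → a₂ ≠ x₁ → a₂ ≠ x₂ → b₁ ≠ x₁ → b₁ ≠ x₂ →
      b₂ ≠ x₁ → b₂ ≠ x₂ → a₁ ≠ a₂ → b₁ ≠ b₂ → A2 G u v a₁ b₁ → A2 G u v a₁ b₂ →
      A2 G u v a₂ b₁ → A2 G u v a₂ b₂ → False := by
  intro a₁ a₂ b₁ b₂ h1 h2 h3 h4 h5 h6 h7 h8 h9 h10 e1 e2 e3 e4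
  have m : ∀ y : V, y ≠ x₁ → y ≠ x₂ → y ∈ ({x₁, x₂}ᶜ : Finset V) := by
    intro y hy1 hy2
    simp [Finset.mem_compl, Finset.mem_insert, hy1, hy2]
  exact hsc ⟨⟨a₁, m _ h1 h2⟩, ⟨a₂, m _ h3 h4⟩, ⟨b₁, m _ h5 h6⟩, ⟨b₂, m _ h7 h8⟩,
    fun h => h9 (congrArg Subtype.val h), fun h => h10 (congrArg Subtype.val h),
    e1, e2, e3, e4⟩

lemma core1 {G : LoopGraph V} {u v x₁ x₂ : V} (h : Facts G u v x₁ x₂)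
    {C : Finset (Finset V × Finset V)} (hC : G.IsCover C) :
    ∃ D, VCover G u v x₁ x₂ D ∧ (sjComponents D).card + 2 ≤ (sjComponents C).card := by
  classical
  obtain ⟨hx, hx1u, hx1v, hx2u, hx2v, a1, a2, a3, n1, n2, nuv⟩ := h
  obtain ⟨hCne, hCiff⟩ := hC
  have nl1 : ¬ G.Adj x₁ x₁ := by
    intro hl
    rcases (n1 x₁).1 hl with e | e
    · exact hx1u e
    · exact hx e
  have nl2 : ¬ G.Adj x₂ x₂ := by
    intro hl
    rcases (n2 x₂).1 hl with e | e
    · exact hx.symm e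
    · exact hx2v e
  have valid : ∀ p ∈ C, ∀ a ∈ p.1, ∀ b ∈ p.2, G.Adj a b := by
    intro p hp a ha b hb
    exact (hCiff a b).2 ⟨p, hp, Or.inl ⟨ha, hb⟩⟩
  have adjy1 : ∀ y, G.Adj y x₁ → y = u ∨ y = x₂ := fun y hy => (n1 y).1 (G.symm _ _ hy)
  have adjy2 : ∀ y, G.Adj y x₂ → y = x₁ ∨ y = v := fun y hy => (n2 y).1 (G.symm _ _ hy)
  set P := C.filter (fun p => (x₁ ∈ p.1 ∧ x₂ ∈ p.2) ∨ (x₂ ∈ p.1 ∧ x₁ ∈ p.2)) with hPdef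
  have memP : ∀ p, p ∈ P ↔ p ∈ C ∧ ((x₁ ∈ p.1 ∧ x₂ ∈ p.2) ∨ (x₂ ∈ p.1 ∧ x₁ ∈ p.2)) := by
    intro p; rw [hPdef, Finset.mem_filter]
  have memCP : ∀ p, p ∈ C \ P ↔ p ∈ C ∧ ¬((x₁ ∈ p.1 ∧ x₂ ∈ p.2) ∨ (x₂ ∈ p.1 ∧ x₁ ∈ p.2)) := by
    intro p
    rw [Finset.mem_sdiff, memP]
    constructor
    · rintro ⟨h1, h2⟩
      exact ⟨h1, fun hh => h2 ⟨h1, hh⟩⟩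
    · rintro ⟨h1, h2⟩
      exact ⟨h1, fun hh => h2 hh.2⟩
  set gm : Finset V → Finset V := fun S =>
    ((S.erase x₁).erase x₂) ∪ ((if x₁ ∈ S then {v} else ∅) ∪ (if x₂ ∈ S then {u} else ∅))
    with hgm
  have mem_gm : ∀ S y, y ∈ gm S ↔
      ((y ∈ S ∧ y ≠ x₁ ∧ y ≠ x₂) ∨ (x₁ ∈ S ∧ y = v) ∨ (x₂ ∈ S ∧ y = u)) := by
    intro S y
    by_cases e1 : x₁ ∈ S <;> by_cases e2 : x₂ ∈ S <;>
      simp only [hgm, Finset.mem_union, Finset.mem_erase, if_pos, if_neg, e1, e2,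
        Finset.mem_singleton, Finset.notMem_empty, if_true, if_false, true_and, false_and,
        false_or, or_false] <;> tauto
  have gm_avoid : ∀ S y, y ∈ gm S → y ≠ x₁ ∧ y ≠ x₂ := by
    intro S y hy
    rw [mem_gm] at hy
    rcases hy with ⟨_, h1, h2⟩ | ⟨_, rfl⟩ | ⟨_, rfl⟩
    · exact ⟨h1, h2⟩
    · exact ⟨Ne.symm hx1v, Ne.symm hx2v⟩
    · exact ⟨Ne.symm hx1u, Ne.symm hx2u⟩
  have gm_ne : ∀ S : Finset V, S.Nonempty → (gm S).Nonempty := by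
    intro S ⟨y, hy⟩
    by_cases e1 : y = x₁
    · exact ⟨v, (mem_gm S v).2 (Or.inr (Or.inl ⟨e1 ▸ hy, rfl⟩))⟩
    by_cases e2 : y = x₂
    · exact ⟨u, (mem_gm S u).2 (Or.inr (Or.inr ⟨e2 ▸ hy, rfl⟩))⟩
    · exact ⟨y, (mem_gm S y).2 (Or.inl ⟨hy, e1, e2⟩)⟩
  have gm_id : ∀ S : Finset V, x₁ ∉ S → x₂ ∉ S → gm S = S := by
    intro S m1 m2
    ext y
    rw [mem_gm]
    constructor
    · rintro (⟨hy, _, _⟩ | ⟨hm, _⟩ | ⟨hm, _⟩)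
      · exact hy
      · exact absurd hm m1
      · exact absurd hm m2
    · intro hy
      refine Or.inl ⟨hy, ?_, ?_⟩
      · rintro rfl; exact m1 hy
      · rintro rfl; exact m2 hy
  have gm_x1 : gm {x₁} = {v} := by
    ext y
    rw [mem_gm]
    constructor
    · rintro (⟨hy, hne, _⟩ | ⟨_, rfl⟩ | ⟨e, _⟩)
      · rw [Finset.mem_singleton] at hy; exact absurd hy hne
      · exact Finset.mem_singleton_self _
      · rw [Finset.mem_singleton] at e; exact absurd e.symm hx
    · intro hy
      rw [Finset.mem_singleton] at hy
      subst hy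
      exact Or.inr (Or.inl ⟨Finset.mem_singleton_self x₁, rfl⟩)
  have gm_x2 : gm {x₂} = {u} := by
    ext y
    rw [mem_gm]
    constructor
    · rintro (⟨hy, _, hne⟩ | ⟨e, _⟩ | ⟨_, rfl⟩)
      · rw [Finset.mem_singleton] at hy; exact absurd hy hne
      · rw [Finset.mem_singleton] at e; exact absurd e hx
      · exact Finset.mem_singleton_self _
    · intro hy
      rw [Finset.mem_singleton] at hy
      subst hy
      exact Or.inr (Or.inr ⟨Finset.mem_singleton_self x₂, rfl⟩)
  -- P-pairs only cover edges touching x₁ x₂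
  have Pedge0 : ∀ K L : Finset V, (∀ a ∈ K, ∀ b ∈ L, G.Adj a b) → x₁ ∈ K → x₂ ∈ L →
      ∀ a ∈ K, ∀ b ∈ L, a = x₁ ∨ b = x₂ := by
    intro K L hval h1 h2 a ha b hb
    rcases adjy2 a (hval a ha x₂ h2) with e | e
    · exact Or.inl e
    rcases (n1 b).1 (hval x₁ h1 b hb) with f | f
    · subst e; subst f
      exact absurd (G.symm _ _ (hval a ha b hb)) nuv
    · exact Or.inr f
  have covCP : ∀ a b, a ≠ x₁ → a ≠ x₂ → b ≠ x₁ → b ≠ x₂ → G.Adj a b →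
      ∃ p ∈ C \ P, cro p a b := by
    intro a b ha1 ha2 hb1 hb2 hadj
    obtain ⟨p, hp, hcr⟩ := (hCiff a b).1 hadj
    refine ⟨p, (memCP p).2 ⟨hp, ?_⟩, hcr⟩
    rintro (⟨m1, m2⟩ | ⟨m2, m1⟩)
    · rcases hcr with ⟨c1, c2⟩ | ⟨c1, c2⟩
      · rcases Pedge0 p.1 p.2 (valid p hp) m1 m2 a c1 b c2 with e | e
        · exact ha1 e
        · exact hb2 e
      · rcases Pedge0 p.1 p.2 (valid p hp) m1 m2 b c2 a c1 with e | e
        · exact hb1 e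
        · exact ha2 e
    · have hval' : ∀ x ∈ p.2, ∀ y ∈ p.1, G.Adj x y := by
        intro x hx' y hy'
        exact G.symm _ _ (valid p hp y hy' x hx')
      rcases hcr with ⟨c1, c2⟩ | ⟨c1, c2⟩
      · rcases Pedge0 p.2 p.1 hval' m1 m2 b c2 a c1 with e | e
        · exact hb1 e
        · exact ha2 e
      · rcases Pedge0 p.2 p.1 hval' m1 m2 a c1 b c2 with e | e
        · exact ha1 e
        · exact hb2 e
  -- validity of images
  have gm_val : ∀ K L : Finset V, (∀ a ∈ K, ∀ b ∈ L, G.Adj a b) →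
      ∀ a ∈ gm K, ∀ b ∈ gm L, A2 G u v a b := by
    intro K L hval a ha b hb
    rw [mem_gm] at ha hb
    rcases ha with ⟨haK, ha1, ha2⟩ | ⟨hK, rfl⟩ | ⟨hK, rfl⟩ <;>
      rcases hb with ⟨hbL, hb1, hb2⟩ | ⟨hL, rfl⟩ | ⟨hL, rfl⟩
    · exact Or.inl (hval a haK b hbL)
    · -- b = v from x₁ ∈ L
      rcases adjy1 a (hval a haK x₁ hL) with rfl | rfl
      · exact Or.inr (Or.inl ⟨rfl, rfl⟩)
      · exact absurd rfl ha2
    · rcases adjy2 a (hval a haK x₂ hL) with rfl | rfl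
      · exact absurd rfl ha1
      · exact Or.inr (Or.inr ⟨rfl, rfl⟩)
    · rcases (n1 b).1 (hval x₁ hK b hbL) with rfl | rfl
      · exact Or.inr (Or.inr ⟨rfl, rfl⟩)
      · exact absurd rfl hb2
    · exact absurd (hval x₁ hK x₁ hL) nl1
    · exact Or.inr (Or.inr ⟨rfl, rfl⟩)
    · rcases (n2 b).1 (hval x₂ hK b hbL) with rfl | rfl
      · exact absurd rfl hb1
      · exact Or.inr (Or.inl ⟨rfl, rfl⟩)
    · exact Or.inr (Or.inl ⟨rfl, rfl⟩)
    · exact absurd (hval x₂ hK x₂ hL) nl2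
  set Cg := (C \ P).image (fun p => (gm p.1, gm p.2)) with hCgdef
  have Cg_nonempty : ∀ p ∈ Cg, p.1.Nonempty ∧ p.2.Nonempty := by
    intro p hp
    rw [hCgdef, Finset.mem_image] at hp
    obtain ⟨q, hq, rfl⟩ := hp
    have hqC := ((memCP q).1 hq).1
    exact ⟨gm_ne _ (hCne q hqC).1, gm_ne _ (hCne q hqC).2⟩
  have Cg_avoid : ∀ p ∈ Cg, ∀ y, (y ∈ p.1 ∨ y ∈ p.2) → y ≠ x₁ ∧ y ≠ x₂ := by
    intro p hp y hy
    rw [hCgdef, Finset.mem_image] at hp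
    obtain ⟨q, hq, rfl⟩ := hp
    rcases hy with hy | hy
    · exact gm_avoid _ _ hy
    · exact gm_avoid _ _ hy
  have Cg_valid : ∀ p ∈ Cg, ∀ a b, cro p a b → A2 G u v a b := by
    intro p hp a b hcr
    rw [hCgdef, Finset.mem_image] at hp
    obtain ⟨q, hq, rfl⟩ := hp
    have hqC := ((memCP q).1 hq).1
    rcases hcr with ⟨c1, c2⟩ | ⟨c1, c2⟩
    · exact gm_val q.1 q.2 (valid q hqC) a c1 b c2
    · exact gm_val q.2 q.1 (fun x hx' y hy' => G.symm _ _ (valid q hqC y hy' x hx')) a c1 b c2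
  have Cg_covold : ∀ a b, a ≠ x₁ → a ≠ x₂ → b ≠ x₁ → b ≠ x₂ → G.Adj a b →
      ∃ p ∈ Cg, cro p a b := by
    intro a b ha1 ha2 hb1 hb2 hadj
    obtain ⟨q, hq, hcr⟩ := covCP a b ha1 ha2 hb1 hb2 hadj
    refine ⟨(gm q.1, gm q.2), by rw [hCgdef]; exact Finset.mem_image_of_mem _ hq, ?_⟩
    rcases hcr with ⟨c1, c2⟩ | ⟨c1, c2⟩
    · exact Or.inl ⟨(mem_gm _ _).2 (Or.inl ⟨c1, ha1, ha2⟩), (mem_gm _ _).2 (Or.inl ⟨c2, hb1, hb2⟩)⟩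
    · exact Or.inr ⟨(mem_gm _ _).2 (Or.inl ⟨c1, ha1, ha2⟩), (mem_gm _ _).2 (Or.inl ⟨c2, hb1, hb2⟩)⟩
  -- ===== counting infrastructure =====
  set GammaC := sjComponents C with hGamC
  set GamT := GammaC.filter (fun S => x₁ ∈ S ∨ x₂ ∈ S) with hGamT
  set Gam0 := GammaC.filter (fun S => ¬(x₁ ∈ S ∨ x₂ ∈ S)) with hGam0
  have hsplit : GamT.card + Gam0.card = GammaC.card :=
    Finset.card_filter_add_card_filter_not _
  set tau : Finset (Finset V) :=
    (sjComponents (C \ P)).filter (fun S => x₁ ∈ S ∨ x₂ ∈ S) with htaudef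
  have tau_sub : tau ⊆ GamT := by
    intro S hS
    rw [htaudef, Finset.mem_filter] at hS
    rw [hGamT, Finset.mem_filter]
    exact ⟨sjComponents_subset Finset.sdiff_subset hS.1, hS.2⟩
  have comps_Cg : sjComponents Cg ⊆ Gam0 ∪ tau.image gm := by
    intro S hS
    rw [hCgdef, sjComponents_pairimage, Finset.mem_image] at hS
    obtain ⟨T, hT, rfl⟩ := hS
    by_cases htch : x₁ ∈ T ∨ x₂ ∈ T
    · exact Finset.mem_union_right _
        (Finset.mem_image_of_mem _ (Finset.mem_filter.2 ⟨hT, htch⟩))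
    · push_neg at htch
      rw [gm_id T htch.1 htch.2]
      refine Finset.mem_union_left _ (Finset.mem_filter.2
        ⟨sjComponents_subset Finset.sdiff_subset hT, ?_⟩)
      push_neg
      exact htch
  have partner1 : ∀ S ∈ sjComponents (C \ P), x₁ ∈ S →
      (∀ y ∈ S, G.Adj u y) ∧ ∃ p ∈ C \ P, (p.1 = S ∧ p.2 = {u}) ∨ (p.2 = S ∧ p.1 = {u}) := by
    intro S hS hx1S
    rw [mem_sjComponents] at hS
    obtain ⟨p, hp, hside⟩ := hS
    have hpC := ((memCP p).1 hp).1
    have hpnP := ((memCP p).1 hp).2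
    rcases hside with h1 | h1
    · have hT : p.2 = {u} := by
        have hsub : p.2 ⊆ {u} := by
          intro t ht
          rcases (n1 t).1 (valid p hpC x₁ (h1 ▸ hx1S) t ht) with e | e
          · rw [Finset.mem_singleton]; exact e
          · exact absurd (Or.inl ⟨h1 ▸ hx1S, e ▸ ht⟩) hpnP
        rcases Finset.subset_singleton_iff.1 hsub with e | e
        · exact absurd e (Finset.nonempty_iff_ne_empty.1 (hCne p hpC).2)
        · exact e
      constructor
      · intro y hy
        exact G.symm _ _ (valid p hpC y (h1 ▸ hy) u (hT ▸ Finset.mem_singleton_self u))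
      · exact ⟨p, hp, Or.inl ⟨h1, hT⟩⟩
    · have hT : p.1 = {u} := by
        have hsub : p.1 ⊆ {u} := by
          intro t ht
          rcases (n1 t).1 (G.symm _ _ (valid p hpC t ht x₁ (h1 ▸ hx1S))) with e | e
          · rw [Finset.mem_singleton]; exact e
          · exact absurd (Or.inr ⟨e ▸ ht, h1 ▸ hx1S⟩) hpnP
        rcases Finset.subset_singleton_iff.1 hsub with e | e
        · exact absurd e (Finset.nonempty_iff_ne_empty.1 (hCne p hpC).1)
        · exact e
      constructor
      · intro y hy
        exact valid p hpC u (hT ▸ Finset.mem_singleton_self u) y (h1 ▸ hy)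
      · exact ⟨p, hp, Or.inr ⟨h1, hT⟩⟩
  have partner2 : ∀ S ∈ sjComponents (C \ P), x₂ ∈ S →
      (∀ y ∈ S, G.Adj v y) ∧ ∃ p ∈ C \ P, (p.1 = S ∧ p.2 = {v}) ∨ (p.2 = S ∧ p.1 = {v}) := by
    intro S hS hx2S
    rw [mem_sjComponents] at hS
    obtain ⟨p, hp, hside⟩ := hS
    have hpC := ((memCP p).1 hp).1
    have hpnP := ((memCP p).1 hp).2
    rcases hside with h1 | h1
    · have hT : p.2 = {v} := by
        have hsub : p.2 ⊆ {v} := by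
          intro t ht
          rcases (n2 t).1 (valid p hpC x₂ (h1 ▸ hx2S) t ht) with e | e
          · exact absurd (Or.inr ⟨h1 ▸ hx2S, e ▸ ht⟩) hpnP
          · rw [Finset.mem_singleton]; exact e
        rcases Finset.subset_singleton_iff.1 hsub with e | e
        · exact absurd e (Finset.nonempty_iff_ne_empty.1 (hCne p hpC).2)
        · exact e
      constructor
      · intro y hy
        exact G.symm _ _ (valid p hpC y (h1 ▸ hy) v (hT ▸ Finset.mem_singleton_self v))
      · exact ⟨p, hp, Or.inl ⟨h1, hT⟩⟩
    · have hT : p.1 = {v} := by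
        have hsub : p.1 ⊆ {v} := by
          intro t ht
          rcases (n2 t).1 (G.symm _ _ (valid p hpC t ht x₂ (h1 ▸ hx2S))) with e | e
          · exact absurd (Or.inl ⟨e ▸ ht, h1 ▸ hx2S⟩) hpnP
          · rw [Finset.mem_singleton]; exact e
        rcases Finset.subset_singleton_iff.1 hsub with e | e
        · exact absurd e (Finset.nonempty_iff_ne_empty.1 (hCne p hpC).1)
        · exact e
      constructor
      · intro y hy
        exact valid p hpC v (hT ▸ Finset.mem_singleton_self v) y (h1 ▸ hy)
      · exact ⟨p, hp, Or.inr ⟨h1, hT⟩⟩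
  have noV1 : ∀ S ∈ sjComponents (C \ P), x₁ ∈ S → v ∉ S := by
    intro S hS h1 hv
    exact nuv ((partner1 S hS h1).1 v hv)
  have noU2 : ∀ S ∈ sjComponents (C \ P), x₂ ∈ S → u ∉ S := by
    intro S hS h1 hu
    exact nuv (G.symm _ _ ((partner2 S hS h1).1 u hu))
  have gmu : gm {u} = {u} := gm_id _ (by rw [Finset.mem_singleton]; exact hx1u)
    (by rw [Finset.mem_singleton]; exact hx2u)
  have gmv : gm {v} = {v} := gm_id _ (by rw [Finset.mem_singleton]; exact hx1v)
    (by rw [Finset.mem_singleton]; exact hx2v)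
  have cond_of_tau : tau.Nonempty → ∃ p ∈ C \ P, cro (gm p.1, gm p.2) u v := by
    rintro ⟨S, hS⟩
    rw [htaudef, Finset.mem_filter] at hS
    obtain ⟨hSsj, htch⟩ := hS
    rcases htch with h1S | h2S
    · obtain ⟨-, p, hp, horr⟩ := partner1 S hSsj h1S
      have hvS : v ∈ gm S := (mem_gm S v).2 (Or.inr (Or.inl ⟨h1S, rfl⟩))
      refine ⟨p, hp, ?_⟩
      rcases horr with ⟨e1, e2⟩ | ⟨e1, e2⟩
      · exact Or.inr ⟨by rw [e2, gmu]; exact Finset.mem_singleton_self u, by rw [e1]; exact hvS⟩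
      · exact Or.inl ⟨by rw [e2, gmu]; exact Finset.mem_singleton_self u, by rw [e1]; exact hvS⟩
    · obtain ⟨-, p, hp, horr⟩ := partner2 S hSsj h2S
      have huS : u ∈ gm S := (mem_gm S u).2 (Or.inr (Or.inr ⟨h2S, rfl⟩))
      refine ⟨p, hp, ?_⟩
      rcases horr with ⟨e1, e2⟩ | ⟨e1, e2⟩
      · exact Or.inl ⟨by rw [e1]; exact huS, by rw [e2, gmv]; exact Finset.mem_singleton_self v⟩
      · exact Or.inr ⟨by rw [e1]; exact huS, by rw [e2, gmv]; exact Finset.mem_singleton_self v⟩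
  have uGam0 : (∃ S, S ∈ tau ∧ x₁ ∈ S) → ({u} : Finset V) ∈ Gam0 := by
    rintro ⟨S, hS, h1S⟩
    rw [htaudef, Finset.mem_filter] at hS
    obtain ⟨-, p, hp, horr⟩ := partner1 S hS.1 h1S
    have hmem : ({u} : Finset V) ∈ sjComponents (C \ P) := by
      rw [mem_sjComponents]
      refine ⟨p, hp, ?_⟩
      rcases horr with ⟨-, e⟩ | ⟨-, e⟩
      · exact Or.inr e
      · exact Or.inl e
    rw [hGam0, Finset.mem_filter]
    refine ⟨sjComponents_subset Finset.sdiff_subset hmem, ?_⟩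
    rintro (e | e) <;> rw [Finset.mem_singleton] at e
    · exact hx1u e
    · exact hx2u e
  have vGam0 : (∃ S, S ∈ tau ∧ x₂ ∈ S) → ({v} : Finset V) ∈ Gam0 := by
    rintro ⟨S, hS, h2S⟩
    rw [htaudef, Finset.mem_filter] at hS
    obtain ⟨-, p, hp, horr⟩ := partner2 S hS.1 h2S
    have hmem : ({v} : Finset V) ∈ sjComponents (C \ P) := by
      rw [mem_sjComponents]
      refine ⟨p, hp, ?_⟩
      rcases horr with ⟨-, e⟩ | ⟨-, e⟩
      · exact Or.inr e
      · exact Or.inl e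
    rw [hGam0, Finset.mem_filter]
    refine ⟨sjComponents_subset Finset.sdiff_subset hmem, ?_⟩
    rintro (e | e) <;> rw [Finset.mem_singleton] at e
    · exact hx1v e
    · exact hx2v e
  -- the pair covering x₁x₂
  obtain ⟨A, B, hAG, hBG, hx1A, hx2B, hvalAB⟩ :
      ∃ A B : Finset V, A ∈ GammaC ∧ B ∈ GammaC ∧ x₁ ∈ A ∧ x₂ ∈ B ∧
        (∀ a ∈ A, ∀ b ∈ B, G.Adj a b) := by
    obtain ⟨p, hp, hcr⟩ := (hCiff x₁ x₂).1 a2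
    rcases hcr with ⟨c1, c2⟩ | ⟨c1, c2⟩
    · exact ⟨p.1, p.2, mem_sjComponents.2 ⟨p, hp, Or.inl rfl⟩,
        mem_sjComponents.2 ⟨p, hp, Or.inr rfl⟩, c1, c2, valid p hp⟩
    · exact ⟨p.2, p.1, mem_sjComponents.2 ⟨p, hp, Or.inr rfl⟩,
        mem_sjComponents.2 ⟨p, hp, Or.inl rfl⟩, c1, c2,
        fun a ha b hb => G.symm _ _ (valid p hp b hb a ha)⟩
  have hAsub : ∀ a ∈ A, a = x₁ ∨ a = v := fun a ha => adjy2 a (hvalAB a ha x₂ hx2B)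
  have hBsub : ∀ b ∈ B, b = u ∨ b = x₂ := fun b hb => (n1 b).1 (hvalAB x₁ hx1A b hb)
  have hx2A : x₂ ∉ A := by
    intro hm
    rcases hAsub x₂ hm with e | e
    · exact hx e.symm
    · exact hx2v e
  have hx1B : x₁ ∉ B := by
    intro hm
    rcases hBsub x₁ hm with e | e
    · exact hx1u e
    · exact hx e
  have hABne : A ≠ B := fun e => hx1B (e ▸ hx1A)
  have hA_GamT : A ∈ GamT := by
    rw [hGamT, Finset.mem_filter]; exact ⟨hAG, Or.inl hx1A⟩
  have hB_GamT : B ∈ GamT := by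
    rw [hGamT, Finset.mem_filter]; exact ⟨hBG, Or.inr hx2B⟩
  have hAtau : A ∈ tau → A = ({x₁} : Finset V) := by
    intro hA
    rw [htaudef, Finset.mem_filter] at hA
    have hvA : v ∉ A := noV1 A hA.1 hx1A
    apply Finset.Subset.antisymm
    · intro a ha
      rcases hAsub a ha with e | e
      · rw [Finset.mem_singleton]; exact e
      · exact absurd (e ▸ ha) hvA
    · rw [Finset.singleton_subset_iff]; exact hx1A
  have hBtau : B ∈ tau → B = ({x₂} : Finset V) := by
    intro hB
    rw [htaudef, Finset.mem_filter] at hB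
    have huB : u ∉ B := noU2 B hB.1 hx2B
    apply Finset.Subset.antisymm
    · intro b hb
      rcases hBsub b hb with e | e
      · exact absurd (e ▸ hb) huB
      · rw [Finset.mem_singleton]; exact e
    · rw [Finset.singleton_subset_iff]; exact hx2B
  have e1 : (∀ S ∈ sjComponents (C \ P), x₁ ∉ S) →
      ({x₁} : Finset V) ∈ GammaC ∧ ({u, x₂} : Finset V) ∈ GammaC := by
    intro hno
    obtain ⟨q, hq, hcr⟩ := (hCiff u x₁).1 a1
    have hqP : q ∈ P := by
      by_contra hqnP
      have hq' : q ∈ C \ P := Finset.mem_sdiff.2 ⟨hq, hqnP⟩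
      rcases hcr with ⟨c1, c2⟩ | ⟨c1, c2⟩
      · exact hno q.2 (mem_sjComponents.2 ⟨q, hq', Or.inr rfl⟩) c2
      · exact hno q.1 (mem_sjComponents.2 ⟨q, hq', Or.inl rfl⟩) c2
    rcases ((memP q).1 hqP).2 with ⟨m1, m2⟩ | ⟨m1, m2⟩
    · rcases hcr with ⟨c1, c2⟩ | ⟨c1, c2⟩
      · exact absurd (valid q hq x₁ m1 x₁ c2) nl1
      · have hq1 : q.1 = {x₁} := by
          apply Finset.Subset.antisymm
          · intro a ha
            rcases adjy2 a (valid q hq a ha x₂ m2) with e | e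
            · rw [Finset.mem_singleton]; exact e
            · exact absurd (G.symm _ _ (valid q hq a ha u c1)) (e ▸ nuv)
          · rw [Finset.singleton_subset_iff]; exact c2
        have hq2 : q.2 = {u, x₂} := by
          apply Finset.Subset.antisymm
          · intro b hb
            rcases (n1 b).1 (valid q hq x₁ m1 b hb) with rfl | rfl
            · exact Finset.mem_insert_self _ _
            · exact Finset.mem_insert_of_mem (Finset.mem_singleton_self _)
          · intro b hb
            rcases Finset.mem_insert.1 hb with rfl | hb2
            · exact c1
            · rw [Finset.mem_singleton] at hb2; exact hb2 ▸ m2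
        exact ⟨mem_sjComponents.2 ⟨q, hq, Or.inl hq1⟩,
               mem_sjComponents.2 ⟨q, hq, Or.inr hq2⟩⟩
    · rcases hcr with ⟨c1, c2⟩ | ⟨c1, c2⟩
      · have hq2 : q.2 = {x₁} := by
          apply Finset.Subset.antisymm
          · intro a ha
            rcases (n2 a).1 (valid q hq x₂ m1 a ha) with e | e
            · rw [Finset.mem_singleton]; exact e
            · exact absurd (valid q hq u c1 a ha) (e ▸ nuv)
          · rw [Finset.singleton_subset_iff]; exact m2
        have hq1 : q.1 = {u, x₂} := by
          apply Finset.Subset.antisymm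
          · intro b hb
            rcases adjy1 b (valid q hq b hb x₁ m2) with rfl | rfl
            · exact Finset.mem_insert_self _ _
            · exact Finset.mem_insert_of_mem (Finset.mem_singleton_self _)
          · intro b hb
            rcases Finset.mem_insert.1 hb with rfl | hb2
            · exact c1
            · rw [Finset.mem_singleton] at hb2; exact hb2 ▸ m1
        exact ⟨mem_sjComponents.2 ⟨q, hq, Or.inr hq2⟩,
               mem_sjComponents.2 ⟨q, hq, Or.inl hq1⟩⟩
      · exact absurd (valid q hq x₁ c2 x₁ m2) nl1
  have e2 : (∀ S ∈ sjComponents (C \ P), x₂ ∉ S) →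
      ({x₂} : Finset V) ∈ GammaC ∧ ({x₁, v} : Finset V) ∈ GammaC := by
    intro hno
    obtain ⟨q, hq, hcr⟩ := (hCiff x₂ v).1 a3
    have hqP : q ∈ P := by
      by_contra hqnP
      have hq' : q ∈ C \ P := Finset.mem_sdiff.2 ⟨hq, hqnP⟩
      rcases hcr with ⟨c1, c2⟩ | ⟨c1, c2⟩
      · exact hno q.1 (mem_sjComponents.2 ⟨q, hq', Or.inl rfl⟩) c1
      · exact hno q.2 (mem_sjComponents.2 ⟨q, hq', Or.inr rfl⟩) c1
    rcases ((memP q).1 hqP).2 with ⟨m1, m2⟩ | ⟨m1, m2⟩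
    · rcases hcr with ⟨c1, c2⟩ | ⟨c1, c2⟩
      · exact absurd (valid q hq x₂ c1 x₂ m2) nl2
      · have hq1 : q.1 = {x₁, v} := by
          apply Finset.Subset.antisymm
          · intro a ha
            rcases adjy2 a (valid q hq a ha x₂ c1) with rfl | rfl
            · exact Finset.mem_insert_self _ _
            · exact Finset.mem_insert_of_mem (Finset.mem_singleton_self _)
          · intro a ha
            rcases Finset.mem_insert.1 ha with rfl | ha2
            · exact m1
            · rw [Finset.mem_singleton] at ha2; exact ha2 ▸ c2
        have hq2 : q.2 = {x₂} := by
          apply Finset.Subset.antisymm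
          · intro b hb
            rcases (n1 b).1 (valid q hq x₁ m1 b hb) with e | e
            · exact absurd (G.symm _ _ (valid q hq v c2 b hb)) (e ▸ nuv)
            · rw [Finset.mem_singleton]; exact e
          · rw [Finset.singleton_subset_iff]; exact c1
        exact ⟨mem_sjComponents.2 ⟨q, hq, Or.inr hq2⟩,
               mem_sjComponents.2 ⟨q, hq, Or.inl hq1⟩⟩
    · rcases hcr with ⟨c1, c2⟩ | ⟨c1, c2⟩
      · have hq2 : q.2 = {x₁, v} := by
          apply Finset.Subset.antisymm
          · intro b hb
            rcases (n2 b).1 (valid q hq x₂ m1 b hb) with rfl | rfl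
            · exact Finset.mem_insert_self _ _
            · exact Finset.mem_insert_of_mem (Finset.mem_singleton_self _)
          · intro b hb
            rcases Finset.mem_insert.1 hb with rfl | hb2
            · exact m2
            · rw [Finset.mem_singleton] at hb2; exact hb2 ▸ c2
        have hq1 : q.1 = {x₂} := by
          apply Finset.Subset.antisymm
          · intro a ha
            rcases adjy1 a (valid q hq a ha x₁ m2) with e | e
            · exact absurd (valid q hq a ha v c2) (e ▸ nuv)
            · rw [Finset.mem_singleton]; exact e
          · rw [Finset.singleton_subset_iff]; exact c1
        exact ⟨mem_sjComponents.2 ⟨q, hq, Or.inl hq1⟩,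
               mem_sjComponents.2 ⟨q, hq, Or.inr hq2⟩⟩
      · exact absurd (valid q hq x₂ m1 x₂ c1) nl2
  by_cases cond : ∃ p ∈ C \ P, cro (gm p.1, gm p.2) u v
  · -- no extra pair needed
    refine ⟨Cg, ⟨Cg_nonempty, Cg_avoid, ?_⟩, ?_⟩
    · intro a b ha1 ha2 hb1 hb2
      constructor
      · rintro (hadj | ⟨rfl, rfl⟩ | ⟨rfl, rfl⟩)
        · exact Cg_covold a b ha1 ha2 hb1 hb2 hadj
        · obtain ⟨q, hq, hcr⟩ := cond
          exact ⟨(gm q.1, gm q.2), by rw [hCgdef]; exact Finset.mem_image_of_mem _ hq, hcr⟩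
        · obtain ⟨q, hq, hcr⟩ := cond
          exact ⟨(gm q.1, gm q.2), by rw [hCgdef]; exact Finset.mem_image_of_mem _ hq,
            cro_symm hcr⟩
      · rintro ⟨p, hp, hcr⟩
        exact Cg_valid p hp a b hcr
    · -- counting (cond true)
      have hZ : (sjComponents Cg).card ≤ Gam0.card + ((tau.image gm) \ Gam0).card := by
        calc (sjComponents Cg).card ≤ (Gam0 ∪ tau.image gm).card :=
              Finset.card_le_card comps_Cg
          _ = (Gam0 ∪ (tau.image gm \ Gam0)).card := by
              rw [Finset.union_sdiff_self_eq_union]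
          _ ≤ _ := Finset.card_union_le _ _
      have hkey : ((tau.image gm) \ Gam0).card + 2 ≤ GamT.card := by
        by_cases htau0 : tau = ∅
        · rw [htau0]
          rw [Finset.image_empty, Finset.empty_sdiff, Finset.card_empty]
          have hsubAB : ({A, B} : Finset (Finset V)) ⊆ GamT := by
            intro X hX
            rcases Finset.mem_insert.1 hX with rfl | hX
            · exact hA_GamT
            · rw [Finset.mem_singleton] at hX
              exact hX ▸ hB_GamT
          have h2 : ({A, B} : Finset (Finset V)).card = 2 := by
            rw [Finset.card_insert_of_notMem (by rw [Finset.mem_singleton]; exact hABne),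
              Finset.card_singleton]
          have := Finset.card_le_card hsubAB
          omega
        · have unified : (({x₁} : Finset V) ∈ tau → gm {x₁} ∈ Gam0) →
              (({x₂} : Finset V) ∈ tau → gm {x₂} ∈ Gam0) →
              ((tau.image gm) \ Gam0).card + 2 ≤ GamT.card := by
            intro hg1 hg2
            have htc : tau.card ≤ GamT.card := Finset.card_le_card tau_sub
            have hnex12 : ({x₂} : Finset V) ≠ ({x₁} : Finset V) := by
              intro e
              exact hx (Finset.singleton_inj.1 e).symm
            by_cases m1 : ({x₁} : Finset V) ∈ tau <;> by_cases m2 : ({x₂} : Finset V) ∈ tau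
            · have hsub2 : (tau.image gm) \ Gam0 ⊆ ((tau.erase {x₁}).erase {x₂}).image gm := by
                intro X hX
                rw [Finset.mem_sdiff, Finset.mem_image] at hX
                obtain ⟨⟨S, hS, rfl⟩, hnG⟩ := hX
                refine Finset.mem_image_of_mem _ ?_
                rw [Finset.mem_erase, Finset.mem_erase]
                refine ⟨?_, ?_, hS⟩
                · rintro rfl; exact hnG (hg2 hS)
                · rintro rfl; exact hnG (hg1 hS)
              have hc1 : (((tau.erase {x₁}).erase {x₂}).image gm).card ≤ tau.card - 2 := by
                have h1 : (((tau.erase {x₁}).erase {x₂}).image gm).card ≤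
                    ((tau.erase {x₁}).erase {x₂}).card := Finset.card_image_le
                have h2 : ((tau.erase {x₁}).erase {x₂}).card = tau.card - 1 - 1 := by
                  rw [Finset.card_erase_of_mem (Finset.mem_erase.2 ⟨hnex12, m2⟩),
                    Finset.card_erase_of_mem m1]
                omega
              have h2t : 2 ≤ tau.card := by
                have hss : ({({x₁} : Finset V), ({x₂} : Finset V)} : Finset (Finset V)) ⊆ tau := by
                  intro X hX
                  rcases Finset.mem_insert.1 hX with rfl | hX
                  · exact m1
                  · rw [Finset.mem_singleton] at hX
                    exact hX ▸ m2
                have hcc := Finset.card_le_card hss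
                rw [Finset.card_insert_of_notMem
                  (by rw [Finset.mem_singleton]; exact fun e => hnex12 e.symm),
                  Finset.card_singleton] at hcc
                exact hcc
              have := Finset.card_le_card hsub2
              omega
            · have hBn : B ∉ tau := fun hB => m2 (hBtau hB ▸ hB)
              have hsub2 : (tau.image gm) \ Gam0 ⊆ (tau.erase {x₁}).image gm := by
                intro X hX
                rw [Finset.mem_sdiff, Finset.mem_image] at hX
                obtain ⟨⟨S, hS, rfl⟩, hnG⟩ := hX
                refine Finset.mem_image_of_mem _ ?_
                rw [Finset.mem_erase]
                refine ⟨?_, hS⟩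
                · rintro rfl; exact hnG (hg1 hS)
              have hc1 : ((tau.erase {x₁}).image gm).card ≤ tau.card - 1 := by
                have h1 : ((tau.erase {x₁}).image gm).card ≤ (tau.erase {x₁}).card :=
                  Finset.card_image_le
                have h2 : (tau.erase {x₁}).card = tau.card - 1 := Finset.card_erase_of_mem m1
                omega
              have hins : insert B tau ⊆ GamT := by
                intro X hX
                rcases Finset.mem_insert.1 hX with rfl | hX
                · exact hB_GamT
                · exact tau_sub hX
              have hcard : (insert B tau).card = tau.card + 1 :=
                Finset.card_insert_of_notMem hBn
              have h1t : 1 ≤ tau.card := Finset.card_pos.2 ⟨_, m1⟩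
              have := Finset.card_le_card hins
              have := Finset.card_le_card hsub2
              omega
            · have hAn : A ∉ tau := fun hA => m1 (hAtau hA ▸ hA)
              have hsub2 : (tau.image gm) \ Gam0 ⊆ (tau.erase {x₂}).image gm := by
                intro X hX
                rw [Finset.mem_sdiff, Finset.mem_image] at hX
                obtain ⟨⟨S, hS, rfl⟩, hnG⟩ := hX
                refine Finset.mem_image_of_mem _ ?_
                rw [Finset.mem_erase]
                refine ⟨?_, hS⟩
                · rintro rfl; exact hnG (hg2 hS)
              have hc1 : ((tau.erase {x₂}).image gm).card ≤ tau.card - 1 := by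
                have h1 : ((tau.erase {x₂}).image gm).card ≤ (tau.erase {x₂}).card :=
                  Finset.card_image_le
                have h2 : (tau.erase {x₂}).card = tau.card - 1 := Finset.card_erase_of_mem m2
                omega
              have hins : insert A tau ⊆ GamT := by
                intro X hX
                rcases Finset.mem_insert.1 hX with rfl | hX
                · exact hA_GamT
                · exact tau_sub hX
              have hcard : (insert A tau).card = tau.card + 1 :=
                Finset.card_insert_of_notMem hAn
              have h1t : 1 ≤ tau.card := Finset.card_pos.2 ⟨_, m2⟩
              have := Finset.card_le_card hins
              have := Finset.card_le_card hsub2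
              omega
            · have hAn : A ∉ tau := fun hA => m1 (hAtau hA ▸ hA)
              have hBn : B ∉ tau := fun hB => m2 (hBtau hB ▸ hB)
              have hle : ((tau.image gm) \ Gam0).card ≤ tau.card :=
                le_trans (Finset.card_le_card Finset.sdiff_subset) Finset.card_image_le
              have hins : insert A (insert B tau) ⊆ GamT := by
                intro X hX
                rcases Finset.mem_insert.1 hX with rfl | hX
                · exact hA_GamT
                rcases Finset.mem_insert.1 hX with rfl | hX
                · exact hB_GamT
                · exact tau_sub hX
              have hcard : (insert A (insert B tau)).card = tau.card + 2 := by
                rw [Finset.card_insert_of_notMem, Finset.card_insert_of_notMem hBn]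
                intro hA'
                rcases Finset.mem_insert.1 hA' with e | hA''
                · exact hABne e
                · exact hAn hA''
              have := Finset.card_le_card hins
              omega
          by_cases huv : u = v
          · subst huv
            refine unified (fun m1 => ?_) (fun m2 => ?_)
            · rw [gm_x1]
              exact uGam0 ⟨{x₁}, m1, Finset.mem_singleton_self x₁⟩
            · rw [gm_x2]
              exact vGam0 ⟨{x₂}, m2, Finset.mem_singleton_self x₂⟩
          · by_cases t1 : ∃ S, S ∈ tau ∧ x₁ ∈ S
            · by_cases t2 : ∃ S, S ∈ tau ∧ x₂ ∈ S
              · refine unified (fun _ => ?_) (fun _ => ?_)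
                · rw [gm_x1]; exact vGam0 t2
                · rw [gm_x2]; exact uGam0 t1
              · -- no x₂ in tau
                have hno2 : ∀ S ∈ sjComponents (C \ P), x₂ ∉ S := by
                  intro S hS h2S
                  refine t2 ⟨S, ?_, h2S⟩
                  rw [htaudef]
                  exact Finset.mem_filter.2 ⟨hS, Or.inr h2S⟩
                obtain ⟨hm1, hm2⟩ := e2 hno2
                have hT1 : ({x₂} : Finset V) ∈ GamT := by
                  rw [hGamT, Finset.mem_filter]
                  exact ⟨hm1, Or.inr (Finset.mem_singleton_self _)⟩
                have hT2 : ({x₁, v} : Finset V) ∈ GamT := by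
                  rw [hGamT, Finset.mem_filter]
                  exact ⟨hm2, Or.inl (Finset.mem_insert_self _ _)⟩
                have hn1 : ({x₂} : Finset V) ∉ tau :=
                  fun hh => t2 ⟨{x₂}, hh, Finset.mem_singleton_self _⟩
                have hn2 : ({x₁, v} : Finset V) ∉ tau := by
                  intro hh
                  rw [htaudef, Finset.mem_filter] at hh
                  exact noV1 _ hh.1 (Finset.mem_insert_self _ _)
                    (Finset.mem_insert_of_mem (Finset.mem_singleton_self v))
                have hne12 : ({x₂} : Finset V) ≠ {x₁, v} := by
                  intro e
                  have hm : x₂ ∈ ({x₁, v} : Finset V) := e ▸ Finset.mem_singleton_self x₂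
                  rcases Finset.mem_insert.1 hm with e2 | e2
                  · exact hx e2.symm
                  · rw [Finset.mem_singleton] at e2
                    exact hx2v e2
                have hins : insert ({x₂} : Finset V) (insert ({x₁, v} : Finset V) tau) ⊆ GamT := by
                  intro X hX
                  rcases Finset.mem_insert.1 hX with rfl | hX
                  · exact hT1
                  rcases Finset.mem_insert.1 hX with rfl | hX
                  · exact hT2
                  · exact tau_sub hX
                have hcard : (insert ({x₂} : Finset V) (insert ({x₁, v} : Finset V) tau)).card
                    = tau.card + 2 := by
                  rw [Finset.card_insert_of_notMem, Finset.card_insert_of_notMem hn2]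
                  intro hh
                  rcases Finset.mem_insert.1 hh with e | hh2
                  · exact hne12 e
                  · exact hn1 hh2
                have hle : ((tau.image gm) \ Gam0).card ≤ tau.card :=
                  le_trans (Finset.card_le_card Finset.sdiff_subset) Finset.card_image_le
                have := Finset.card_le_card hins
                omega
            · -- no x₁ in tau
              have hno1 : ∀ S ∈ sjComponents (C \ P), x₁ ∉ S := by
                intro S hS h1S
                refine t1 ⟨S, ?_, h1S⟩
                rw [htaudef]
                exact Finset.mem_filter.2 ⟨hS, Or.inl h1S⟩
              obtain ⟨hm1, hm2⟩ := e1 hno1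
              have hT1 : ({x₁} : Finset V) ∈ GamT := by
                rw [hGamT, Finset.mem_filter]
                exact ⟨hm1, Or.inl (Finset.mem_singleton_self _)⟩
              have hT2 : ({u, x₂} : Finset V) ∈ GamT := by
                rw [hGamT, Finset.mem_filter]
                exact ⟨hm2, Or.inr (Finset.mem_insert_of_mem (Finset.mem_singleton_self _))⟩
              have hn1 : ({x₁} : Finset V) ∉ tau :=
                fun hh => t1 ⟨{x₁}, hh, Finset.mem_singleton_self _⟩
              have hn2 : ({u, x₂} : Finset V) ∉ tau := by
                intro hh
                rw [htaudef, Finset.mem_filter] at hh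
                exact noU2 _ hh.1 (Finset.mem_insert_of_mem (Finset.mem_singleton_self _))
                  (Finset.mem_insert_self _ _)
              have hne12 : ({x₁} : Finset V) ≠ {u, x₂} := by
                intro e
                have hm : x₁ ∈ ({u, x₂} : Finset V) := e ▸ Finset.mem_singleton_self x₁
                rcases Finset.mem_insert.1 hm with e2 | e2
                · exact hx1u e2
                · rw [Finset.mem_singleton] at e2
                  exact hx e2
              have hins : insert ({x₁} : Finset V) (insert ({u, x₂} : Finset V) tau) ⊆ GamT := by
                intro X hX
                rcases Finset.mem_insert.1 hX with rfl | hX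
                · exact hT1
                rcases Finset.mem_insert.1 hX with rfl | hX
                · exact hT2
                · exact tau_sub hX
              have hcard : (insert ({x₁} : Finset V) (insert ({u, x₂} : Finset V) tau)).card
                  = tau.card + 2 := by
                rw [Finset.card_insert_of_notMem, Finset.card_insert_of_notMem hn2]
                intro hh
                rcases Finset.mem_insert.1 hh with e | hh2
                · exact hne12 e
                · exact hn1 hh2
              have hle : ((tau.image gm) \ Gam0).card ≤ tau.card :=
                le_trans (Finset.card_le_card Finset.sdiff_subset) Finset.card_image_le
              have := Finset.card_le_card hins
              omega
      omega
  · -- extra pair ({u},{v})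
    refine ⟨Cg ∪ {({u}, {v})}, ⟨?_, ?_, ?_⟩, ?_⟩
    · intro p hp
      rcases Finset.mem_union.1 hp with hp | hp
      · exact Cg_nonempty p hp
      · rw [Finset.mem_singleton] at hp
        subst hp
        exact ⟨⟨u, Finset.mem_singleton_self u⟩, ⟨v, Finset.mem_singleton_self v⟩⟩
    · intro p hp y hy
      rcases Finset.mem_union.1 hp with hp | hp
      · exact Cg_avoid p hp y hy
      · rw [Finset.mem_singleton] at hp
        subst hp
        rcases hy with hy | hy <;> rw [Finset.mem_singleton] at hy <;> subst hy
        · exact ⟨Ne.symm hx1u, Ne.symm hx2u⟩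
        · exact ⟨Ne.symm hx1v, Ne.symm hx2v⟩
    · intro a b ha1 ha2 hb1 hb2
      constructor
      · rintro (hadj | ⟨rfl, rfl⟩ | ⟨rfl, rfl⟩)
        · obtain ⟨p, hp, hcr⟩ := Cg_covold a b ha1 ha2 hb1 hb2 hadj
          exact ⟨p, Finset.mem_union_left _ hp, hcr⟩
        · exact ⟨(({a} : Finset V), ({b} : Finset V)),
            Finset.mem_union_right _ (Finset.mem_singleton_self _),
            Or.inl ⟨Finset.mem_singleton_self _, Finset.mem_singleton_self _⟩⟩
        · exact ⟨(({b} : Finset V), ({a} : Finset V)),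
            Finset.mem_union_right _ (Finset.mem_singleton_self _),
            Or.inr ⟨Finset.mem_singleton_self _, Finset.mem_singleton_self _⟩⟩
      · rintro ⟨p, hp, hcr⟩
        rcases Finset.mem_union.1 hp with hp | hp
        · exact Cg_valid p hp a b hcr
        · rw [Finset.mem_singleton] at hp
          subst hp
          rcases hcr with ⟨c1, c2⟩ | ⟨c1, c2⟩ <;>
            rw [Finset.mem_singleton] at c1 c2 <;> subst c1 <;> subst c2
          · exact Or.inr (Or.inl ⟨rfl, rfl⟩)
          · exact Or.inr (Or.inr ⟨rfl, rfl⟩)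
    · -- counting (cond false)
      have htau0 : tau = ∅ := by
        rw [← Finset.not_nonempty_iff_eq_empty]
        intro hne
        exact cond (cond_of_tau hne)
      have hCg0 : sjComponents Cg ⊆ Gam0 := by
        intro S hS
        rcases Finset.mem_union.1 (comps_Cg hS) with h' | h'
        · exact h'
        · rw [htau0, Finset.image_empty] at h'
          exact absurd h' (Finset.notMem_empty _)
      have hsj : sjComponents (Cg ∪ {(({u} : Finset V), ({v} : Finset V))}) ⊆
          Gam0 ∪ {({u} : Finset V), ({v} : Finset V)} := by
        rw [sjComponents_union]
        intro S hS
        rcases Finset.mem_union.1 hS with h' | h'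
        · exact Finset.mem_union_left _ (hCg0 h')
        · rw [mem_sjComponents] at h'
          obtain ⟨p, hp, hside⟩ := h'
          rw [Finset.mem_singleton] at hp
          subst hp
          apply Finset.mem_union_right
          rcases hside with e | e
          · exact Finset.mem_insert.2 (Or.inl e.symm)
          · exact Finset.mem_insert.2 (Or.inr (Finset.mem_singleton.2 e.symm))
      have hcard1 : (sjComponents (Cg ∪ {(({u} : Finset V), ({v} : Finset V))})).card ≤
          Gam0.card + 2 := by
        have h1 := Finset.card_le_card hsj
        have h2 : (Gam0 ∪ {({u} : Finset V), ({v} : Finset V)}).card ≤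
            Gam0.card + ({({u} : Finset V), ({v} : Finset V)} : Finset (Finset V)).card :=
          Finset.card_union_le _ _
        have h3 : ({({u} : Finset V), ({v} : Finset V)} : Finset (Finset V)).card ≤ 2 := by
          refine le_trans (Finset.card_insert_le _ _) ?_
          rw [Finset.card_singleton]
        omega
      have hno1 : ∀ S ∈ sjComponents (C \ P), x₁ ∉ S := by
        intro S hS h1S
        have hmem : S ∈ tau := by
          rw [htaudef]
          exact Finset.mem_filter.2 ⟨hS, Or.inl h1S⟩
        rw [htau0] at hmem
        exact absurd hmem (Finset.notMem_empty _)
      have hno2 : ∀ S ∈ sjComponents (C \ P), x₂ ∉ S := by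
        intro S hS h2S
        have hmem : S ∈ tau := by
          rw [htaudef]
          exact Finset.mem_filter.2 ⟨hS, Or.inr h2S⟩
        rw [htau0] at hmem
        exact absurd hmem (Finset.notMem_empty _)
      obtain ⟨hg1, hg2⟩ := e1 hno1
      obtain ⟨hg3, hg4⟩ := e2 hno2
      have d12 : ({x₁} : Finset V) ≠ {u, x₂} := by
        intro e
        have hm : x₁ ∈ ({u, x₂} : Finset V) := e ▸ Finset.mem_singleton_self x₁
        rcases Finset.mem_insert.1 hm with e2 | e2
        · exact hx1u e2
        · rw [Finset.mem_singleton] at e2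
          exact hx e2
      have d13 : ({x₁} : Finset V) ≠ {x₂} := fun e => hx (Finset.singleton_inj.1 e)
      have d14 : ({x₁} : Finset V) ≠ {x₁, v} := by
        intro e
        have hm : v ∈ ({x₁} : Finset V) := by
          rw [e]
          exact Finset.mem_insert_of_mem (Finset.mem_singleton_self v)
        rw [Finset.mem_singleton] at hm
        exact hx1v hm.symm
      have d23 : ({u, x₂} : Finset V) ≠ {x₂} := by
        intro e
        have hm : u ∈ ({x₂} : Finset V) := e ▸ Finset.mem_insert_self u _
        rw [Finset.mem_singleton] at hm
        exact hx2u hm.symm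
      have d24 : ({u, x₂} : Finset V) ≠ {x₁, v} := by
        intro e
        have hm : x₂ ∈ ({x₁, v} : Finset V) := by
          rw [← e]
          exact Finset.mem_insert_of_mem (Finset.mem_singleton_self x₂)
        rcases Finset.mem_insert.1 hm with e2 | e2
        · exact hx e2.symm
        · rw [Finset.mem_singleton] at e2
          exact hx2v e2
      have d34 : ({x₂} : Finset V) ≠ {x₁, v} := by
        intro e
        have hm : x₂ ∈ ({x₁, v} : Finset V) := e ▸ Finset.mem_singleton_self x₂
        rcases Finset.mem_insert.1 hm with e2 | e2
        · exact hx e2.symm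
        · rw [Finset.mem_singleton] at e2
          exact hx2v e2
      have hfour : ({({x₁} : Finset V), ({u, x₂} : Finset V), ({x₂} : Finset V),
          ({x₁, v} : Finset V)} : Finset (Finset V)) ⊆ GamT := by
        intro X hX
        rw [hGamT]
        rcases Finset.mem_insert.1 hX with rfl | hX
        · exact Finset.mem_filter.2 ⟨hg1, Or.inl (Finset.mem_singleton_self _)⟩
        rcases Finset.mem_insert.1 hX with rfl | hX
        · exact Finset.mem_filter.2 ⟨hg2,
            Or.inr (Finset.mem_insert_of_mem (Finset.mem_singleton_self _))⟩
        rcases Finset.mem_insert.1 hX with rfl | hX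
        · exact Finset.mem_filter.2 ⟨hg3, Or.inr (Finset.mem_singleton_self _)⟩
        rw [Finset.mem_singleton] at hX
        subst hX
        exact Finset.mem_filter.2 ⟨hg4, Or.inl (Finset.mem_insert_self _ _)⟩
      have hfourcard : ({({x₁} : Finset V), ({u, x₂} : Finset V), ({x₂} : Finset V),
          ({x₁, v} : Finset V)} : Finset (Finset V)).card = 4 := by
        rw [Finset.card_insert_of_notMem, Finset.card_insert_of_notMem,
          Finset.card_insert_of_notMem, Finset.card_singleton]
        · rw [Finset.mem_singleton]
          exact d34
        · intro hm
          rcases Finset.mem_insert.1 hm with e | hm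
          · exact d23 e
          · rw [Finset.mem_singleton] at hm
            exact d24 hm
        · intro hm
          rcases Finset.mem_insert.1 hm with e | hm
          · exact d12 e
          rcases Finset.mem_insert.1 hm with e | hm
          · exact d13 e
          · rw [Finset.mem_singleton] at hm
            exact d14 hm
      have h4le : 4 ≤ GamT.card := by
        have := Finset.card_le_card hfour
        omega
      omega

lemma core2 {G : LoopGraph V} {u v x₁ x₂ : V} (h : Facts G u v x₁ x₂)
    (hsc : ∀ a₁ a₂ b₁ b₂ : V, a₁ ≠ x₁ → a₁ ≠ x₂ → a₂ ≠ x₁ → a₂ ≠ x₂ → b₁ ≠ x₁ → b₁ ≠ x₂ →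
      b₂ ≠ x₁ → b₂ ≠ x₂ → a₁ ≠ a₂ → b₁ ≠ b₂ → A2 G u v a₁ b₁ → A2 G u v a₁ b₂ →
      A2 G u v a₂ b₁ → A2 G u v a₂ b₂ → False)
    {D : Finset (Finset V × Finset V)} (hD : VCover G u v x₁ x₂ D) :
    ∃ C, G.IsCover C ∧ (sjComponents C).card ≤ (sjComponents D).card + 2 := by
  classical
  obtain ⟨hx, hx1u, hx1v, hx2u, hx2v, a1, a2, a3, n1, n2, nuv⟩ := h
  obtain ⟨hDne, hDav, hDiff⟩ := hD
  have hu1 : u ≠ x₁ := Ne.symm hx1u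
  have hu2 : u ≠ x₂ := Ne.symm hx2u
  have hv1 : v ≠ x₁ := Ne.symm hx1v
  have hv2 : v ≠ x₂ := Ne.symm hx2v
  have adjy1 : ∀ y, G.Adj y x₁ → y = u ∨ y = x₂ := fun y hy => (n1 y).1 (G.symm _ _ hy)
  have hDval : ∀ p ∈ D, ∀ a ∈ p.1, ∀ b ∈ p.2, A2 G u v a b := by
    intro p hp a ha b hb
    have hava := hDav p hp a (Or.inl ha)
    have havb := hDav p hp b (Or.inr hb)
    exact (hDiff a b hava.1 hava.2 havb.1 havb.2).2 ⟨p, hp, Or.inl ⟨ha, hb⟩⟩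
  have A2sy : ∀ a b, A2 G u v a b → A2 G u v b a := by
    rintro a b (hadj | ⟨rfl, rfl⟩ | ⟨rfl, rfl⟩)
    · exact Or.inl (G.symm _ _ hadj)
    · exact Or.inr (Or.inr ⟨rfl, rfl⟩)
    · exact Or.inr (Or.inl ⟨rfl, rfl⟩)
  have hA2uv : A2 G u v u v := Or.inr (Or.inl ⟨rfl, rfl⟩)
  set Q := D.filter (fun p => (u ∈ p.1 ∧ v ∈ p.2) ∨ (u ∈ p.2 ∧ v ∈ p.1)) with hQdef
  have hQmem : ∀ p, p ∈ Q ↔ p ∈ D ∧ ((u ∈ p.1 ∧ v ∈ p.2) ∨ (u ∈ p.2 ∧ v ∈ p.1)) := by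
    intro p; rw [hQdef, Finset.mem_filter]
  have hQD : Q ⊆ D := by intro p hp; exact ((hQmem p).1 hp).1
  obtain ⟨q0, hq0⟩ : Q.Nonempty := by
    obtain ⟨p, hp, hcr⟩ := (hDiff u v hu1 hu2 hv1 hv2).1 hA2uv
    exact ⟨p, (hQmem p).2 ⟨hp, hcr⟩⟩
  -- each uv-covering pair has a singleton side {u} or {v}
  have key : ∀ K L : Finset V, (∀ a ∈ K, ∀ b ∈ L, A2 G u v a b) →
      (∀ y, (y ∈ K ∨ y ∈ L) → y ≠ x₁ ∧ y ≠ x₂) → u ∈ K → v ∈ L →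
      K = {u} ∨ L = {v} := by
    intro K L hval hav huK hvL
    by_contra hno
    push_neg at hno
    obtain ⟨hK, hL⟩ := hno
    have hKs : ¬ K ⊆ {u} := fun hsub =>
      hK (Finset.Subset.antisymm hsub (Finset.singleton_subset_iff.2 huK))
    obtain ⟨w, hwK, hw⟩ := Finset.not_subset.1 hKs
    rw [Finset.mem_singleton] at hw
    have hLs : ¬ L ⊆ {v} := fun hsub =>
      hL (Finset.Subset.antisymm hsub (Finset.singleton_subset_iff.2 hvL))
    obtain ⟨t, htL, ht⟩ := Finset.not_subset.1 hLs
    rw [Finset.mem_singleton] at ht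
    have havw := hav w (Or.inl hwK)
    have havt := hav t (Or.inr htL)
    exact hsc u w v t hu1 hu2 havw.1 havw.2 hv1 hv2 havt.1 havt.2
      (Ne.symm hw) (Ne.symm ht) hA2uv (hval u huK t htL) (hval w hwK v hvL)
      (hval w hwK t htL)
  set tmap : Finset V × Finset V → Finset V × Finset V := fun p =>
    if p.1 = {u} then ({u}, p.2.erase v ∪ {x₁})
    else if p.2 = {u} then (p.1.erase v ∪ {x₁}, {u})
    else if p.1 = {v} then ({v}, p.2.erase u ∪ {x₂})
    else (p.1.erase u ∪ {x₂}, {v}) with htmapdef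
  -- structure of Q-pairs
  have tm : ∀ q ∈ Q,
      (q.1 = {u} ∧ tmap q = ({u}, q.2.erase v ∪ {x₁}) ∧ v ∈ q.2) ∨
      (q.1 ≠ {u} ∧ q.2 = {u} ∧ tmap q = (q.1.erase v ∪ {x₁}, {u}) ∧ v ∈ q.1) ∨
      (q.1 ≠ {u} ∧ q.2 ≠ {u} ∧ q.1 = {v} ∧ tmap q = ({v}, q.2.erase u ∪ {x₂}) ∧ u ∈ q.2) ∨
      (q.1 ≠ {u} ∧ q.2 ≠ {u} ∧ q.1 ≠ {v} ∧ q.2 = {v} ∧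
        tmap q = (q.1.erase u ∪ {x₂}, {v}) ∧ u ∈ q.1) := by
    intro q hq
    obtain ⟨hqD, hcr⟩ := (hQmem q).1 hq
    have hval := hDval q hqD
    have hav := hDav q hqD
    by_cases b1 : q.1 = {u}
    · refine Or.inl ⟨b1, by rw [htmapdef]; simp only [if_pos b1], ?_⟩
      rcases hcr with ⟨h1, h2⟩ | ⟨h1, h2⟩
      · exact h2
      · rw [b1, Finset.mem_singleton] at h2
        exact h2 ▸ h1
    · by_cases b2 : q.2 = {u}
      · refine Or.inr (Or.inl ⟨b1, b2, by rw [htmapdef]; simp only [if_neg b1, if_pos b2], ?_⟩)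
        rcases hcr with ⟨h1, h2⟩ | ⟨h1, h2⟩
        · rw [b2, Finset.mem_singleton] at h2
          exact h2 ▸ h1
        · exact h2
      · by_cases b3 : q.1 = {v}
        · refine Or.inr (Or.inr (Or.inl ⟨b1, b2, b3,
            by rw [htmapdef]; simp only [if_neg b1, if_neg b2, if_pos b3], ?_⟩))
          rcases hcr with ⟨h1, h2⟩ | ⟨h1, h2⟩
          · rw [b3, Finset.mem_singleton] at h1
            exact absurd (h1 ▸ b3) b1
          · exact h1
        · have b4 : q.2 = {v} := by
            rcases hcr with ⟨h1, h2⟩ | ⟨h1, h2⟩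
            · rcases key q.1 q.2 hval (fun y hy => hav y hy) h1 h2 with e | e
              · exact absurd e b1
              · exact e
            · rcases key q.2 q.1 (fun a ha b hb => A2sy b a (hval b hb a ha))
                (fun y hy => hav y (Or.symm hy)) h1 h2 with e | e
              · exact absurd e b2
              · exact absurd e b3
          have hu4 : u ∈ q.1 := by
            rcases hcr with ⟨h1, h2⟩ | ⟨h1, h2⟩
            · exact h1
            · rw [b4, Finset.mem_singleton] at h1
              rw [← h1] at h2
              exact h2
          exact Or.inr (Or.inr (Or.inr ⟨b1, b2, b3, b4,
            by rw [htmapdef]; simp only [if_neg b1, if_neg b2, if_neg b3], hu4⟩))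
  set base := (D \ Q) ∪ Q.image tmap with hbasedef
  have memDQ : ∀ p, p ∈ D \ Q ↔ p ∈ D ∧ ¬((u ∈ p.1 ∧ v ∈ p.2) ∨ (u ∈ p.2 ∧ v ∈ p.1)) := by
    intro p
    rw [Finset.mem_sdiff, hQmem]
    constructor
    · rintro ⟨h1, h2⟩
      exact ⟨h1, fun hh => h2 ⟨h1, hh⟩⟩
    · rintro ⟨h1, h2⟩
      exact ⟨h1, fun hh => h2 hh.2⟩
  have base_ne : ∀ p ∈ base, p.1.Nonempty ∧ p.2.Nonempty := by
    intro p hp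
    rcases Finset.mem_union.1 hp with hp | hp
    · exact hDne p (Finset.mem_sdiff.1 hp).1
    · rw [Finset.mem_image] at hp
      obtain ⟨q, hq, rfl⟩ := hp
      rcases tm q hq with ⟨_, he, _⟩ | ⟨_, _, he, _⟩ | ⟨_, _, _, he, _⟩ | ⟨_, _, _, _, he, _⟩ <;>
        rw [he]
      · exact ⟨⟨u, Finset.mem_singleton_self u⟩,
          ⟨x₁, Finset.mem_union_right _ (Finset.mem_singleton_self x₁)⟩⟩
      · exact ⟨⟨x₁, Finset.mem_union_right _ (Finset.mem_singleton_self x₁)⟩,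
          ⟨u, Finset.mem_singleton_self u⟩⟩
      · exact ⟨⟨v, Finset.mem_singleton_self v⟩,
          ⟨x₂, Finset.mem_union_right _ (Finset.mem_singleton_self x₂)⟩⟩
      · exact ⟨⟨x₂, Finset.mem_union_right _ (Finset.mem_singleton_self x₂)⟩,
          ⟨v, Finset.mem_singleton_self v⟩⟩
  have A2G : ∀ a b, A2 G u v a b → a ≠ v → ¬(a = u ∧ b = v) → G.Adj a b := by
    rintro a b (hadj | ⟨rfl, rfl⟩ | ⟨rfl, rfl⟩) hav hun
    · exact hadj
    · exact absurd ⟨rfl, rfl⟩ hun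
    · exact absurd rfl hav
  have base_val : ∀ p ∈ base, ∀ a b, cro p a b → G.Adj a b := by
    intro p hp a b hcr
    rcases Finset.mem_union.1 hp with hp | hp
    · obtain ⟨hpD, hnQ⟩ := (memDQ p).1 hp
      rcases hcr with ⟨h1, h2⟩ | ⟨h1, h2⟩
      · rcases hDval p hpD a h1 b h2 with hadj | ⟨rfl, rfl⟩ | ⟨rfl, rfl⟩
        · exact hadj
        · exact absurd (Or.inl ⟨h1, h2⟩) hnQ
        · exact absurd (Or.inr ⟨h2, h1⟩) hnQ
      · rcases hDval p hpD b h2 a h1 with hadj | ⟨rfl, rfl⟩ | ⟨rfl, rfl⟩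
        · exact G.symm _ _ hadj
        · exact absurd (Or.inl ⟨h2, h1⟩) hnQ
        · exact absurd (Or.inr ⟨h1, h2⟩) hnQ
    · rw [Finset.mem_image] at hp
      obtain ⟨q, hq, rfl⟩ := hp
      have hqD := hQD hq
      have huAdj : ∀ s ∈ q.2, q.1 = {u} → s ≠ v → G.Adj u s := by
        intro s hs he hsv
        rcases hDval q hqD u (by rw [he]; exact Finset.mem_singleton_self u) s hs with
          hadj | ⟨_, e⟩ | ⟨e, e2⟩
        · exact hadj
        · exact absurd e hsv
        · exact absurd (e2.trans e) hsv
      rcases tm q hq with ⟨he1, he, _⟩ | ⟨_, he1, he, _⟩ | ⟨_, _, he1, he, _⟩ |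
        ⟨_, _, _, he1, he, _⟩ <;> rw [he] at hcr
      · -- ({u}, q.2.erase v ∪ {x₁})
        rcases hcr with ⟨h1, h2⟩ | ⟨h1, h2⟩
        · rw [Finset.mem_singleton] at h1
          subst h1
          rcases Finset.mem_union.1 h2 with hb | hb
          · obtain ⟨hbv, hbq⟩ := Finset.mem_erase.1 hb
            exact huAdj b hbq he1 hbv
          · rw [Finset.mem_singleton] at hb
            exact hb ▸ a1
        · rw [Finset.mem_singleton] at h2
          subst h2
          rcases Finset.mem_union.1 h1 with ha | ha
          · obtain ⟨hav2, haq⟩ := Finset.mem_erase.1 ha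
            exact G.symm _ _ (huAdj a haq he1 hav2)
          · rw [Finset.mem_singleton] at ha
            exact ha ▸ G.symm _ _ a1
      · -- (q.1.erase v ∪ {x₁}, {u})
        have huAdj2 : ∀ s ∈ q.1, s ≠ v → G.Adj u s := by
          intro s hs hsv
          rcases A2sy _ _ (hDval q hqD s hs u
            (by rw [he1]; exact Finset.mem_singleton_self u)) with hadj | ⟨_, e⟩ | ⟨e, e2⟩
          · exact hadj
          · exact absurd e hsv
          · exact absurd (e2.trans e) hsv
        rcases hcr with ⟨h1, h2⟩ | ⟨h1, h2⟩
        · rw [Finset.mem_singleton] at h2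
          subst h2
          rcases Finset.mem_union.1 h1 with ha | ha
          · obtain ⟨hav2, haq⟩ := Finset.mem_erase.1 ha
            exact G.symm _ _ (huAdj2 a haq hav2)
          · rw [Finset.mem_singleton] at ha
            exact ha ▸ G.symm _ _ a1
        · rw [Finset.mem_singleton] at h1
          subst h1
          rcases Finset.mem_union.1 h2 with hb | hb
          · obtain ⟨hbv, hbq⟩ := Finset.mem_erase.1 hb
            exact huAdj2 b hbq hbv
          · rw [Finset.mem_singleton] at hb
            exact hb ▸ a1
      · -- ({v}, q.2.erase u ∪ {x₂})
        have hvAdj : ∀ s ∈ q.2, s ≠ u → G.Adj v s := by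
          intro s hs hsu
          rcases hDval q hqD v (by rw [he1]; exact Finset.mem_singleton_self v) s hs with
            hadj | ⟨e, e2⟩ | ⟨_, e⟩
          · exact hadj
          · exact absurd (e2.trans e) hsu
          · exact absurd e hsu
        rcases hcr with ⟨h1, h2⟩ | ⟨h1, h2⟩
        · rw [Finset.mem_singleton] at h1
          subst h1
          rcases Finset.mem_union.1 h2 with hb | hb
          · obtain ⟨hbu, hbq⟩ := Finset.mem_erase.1 hb
            exact hvAdj b hbq hbu
          · rw [Finset.mem_singleton] at hb
            exact hb ▸ G.symm _ _ a3
        · rw [Finset.mem_singleton] at h2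
          subst h2
          rcases Finset.mem_union.1 h1 with ha | ha
          · obtain ⟨hau, haq⟩ := Finset.mem_erase.1 ha
            exact G.symm _ _ (hvAdj a haq hau)
          · rw [Finset.mem_singleton] at ha
            exact ha ▸ a3
      · -- (q.1.erase u ∪ {x₂}, {v})
        have hvAdj2 : ∀ s ∈ q.1, s ≠ u → G.Adj v s := by
          intro s hs hsu
          rcases A2sy _ _ (hDval q hqD s hs v
            (by rw [he1]; exact Finset.mem_singleton_self v)) with hadj | ⟨e, e2⟩ | ⟨_, e⟩
          · exact hadj
          · exact absurd (e2.trans e) hsu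
          · exact absurd e hsu
        rcases hcr with ⟨h1, h2⟩ | ⟨h1, h2⟩
        · rw [Finset.mem_singleton] at h2
          subst h2
          rcases Finset.mem_union.1 h1 with ha | ha
          · obtain ⟨hau, haq⟩ := Finset.mem_erase.1 ha
            exact G.symm _ _ (hvAdj2 a haq hau)
          · rw [Finset.mem_singleton] at ha
            exact ha ▸ a3
        · rw [Finset.mem_singleton] at h1
          subst h1
          rcases Finset.mem_union.1 h2 with hb | hb
          · obtain ⟨hbu, hbq⟩ := Finset.mem_erase.1 hb
            exact hvAdj2 b hbq hbu
          · rw [Finset.mem_singleton] at hb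
            exact hb ▸ G.symm _ _ a3
  have base_cov_inner : ∀ a b, a ≠ x₁ → a ≠ x₂ → b ≠ x₁ → b ≠ x₂ → G.Adj a b →
      ∃ p ∈ base, cro p a b := by
    intro a b ha1 ha2 hb1 hb2 hadj
    obtain ⟨p, hp, hcr⟩ := (hDiff a b ha1 ha2 hb1 hb2).1 (Or.inl hadj)
    by_cases hpQ : p ∈ Q
    · refine ⟨tmap p, Finset.mem_union_right _ (Finset.mem_image_of_mem _ hpQ), ?_⟩
      rcases tm p hpQ with ⟨he1, he, _⟩ | ⟨_, he1, he, _⟩ | ⟨_, _, he1, he, _⟩ |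
        ⟨_, _, _, he1, he, _⟩ <;> rw [he]
      · rcases hcr with ⟨h1, h2⟩ | ⟨h1, h2⟩
        · rw [he1, Finset.mem_singleton] at h1
          subst h1
          have hbv : b ≠ v := fun e => nuv (e ▸ hadj)
          exact Or.inl ⟨Finset.mem_singleton_self _,
            Finset.mem_union_left _ (Finset.mem_erase.2 ⟨hbv, h2⟩)⟩
        · rw [he1, Finset.mem_singleton] at h2
          subst h2
          have hav' : a ≠ v := fun e => nuv (G.symm _ _ (e ▸ hadj))
          exact Or.inr ⟨Finset.mem_union_left _ (Finset.mem_erase.2 ⟨hav', h1⟩),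
            Finset.mem_singleton_self _⟩
      · rcases hcr with ⟨h1, h2⟩ | ⟨h1, h2⟩
        · rw [he1, Finset.mem_singleton] at h2
          subst h2
          have hav' : a ≠ v := fun e => nuv (G.symm _ _ (e ▸ hadj))
          exact Or.inl ⟨Finset.mem_union_left _ (Finset.mem_erase.2 ⟨hav', h1⟩),
            Finset.mem_singleton_self _⟩
        · rw [he1, Finset.mem_singleton] at h1
          subst h1
          have hbv : b ≠ v := fun e => nuv (e ▸ hadj)
          exact Or.inr ⟨Finset.mem_singleton_self _,
            Finset.mem_union_left _ (Finset.mem_erase.2 ⟨hbv, h2⟩)⟩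
      · rcases hcr with ⟨h1, h2⟩ | ⟨h1, h2⟩
        · rw [he1, Finset.mem_singleton] at h1
          subst h1
          have hbu : b ≠ u := fun e => nuv (G.symm _ _ (e ▸ hadj))
          exact Or.inl ⟨Finset.mem_singleton_self _,
            Finset.mem_union_left _ (Finset.mem_erase.2 ⟨hbu, h2⟩)⟩
        · rw [he1, Finset.mem_singleton] at h2
          subst h2
          have hau : a ≠ u := fun e => nuv (e ▸ hadj)
          exact Or.inr ⟨Finset.mem_union_left _ (Finset.mem_erase.2 ⟨hau, h1⟩),
            Finset.mem_singleton_self _⟩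
      · rcases hcr with ⟨h1, h2⟩ | ⟨h1, h2⟩
        · rw [he1, Finset.mem_singleton] at h2
          subst h2
          have hau : a ≠ u := fun e => nuv (e ▸ hadj)
          exact Or.inl ⟨Finset.mem_union_left _ (Finset.mem_erase.2 ⟨hau, h1⟩),
            Finset.mem_singleton_self _⟩
        · rw [he1, Finset.mem_singleton] at h1
          subst h1
          have hbu : b ≠ u := fun e => nuv (G.symm _ _ (e ▸ hadj))
          exact Or.inr ⟨Finset.mem_singleton_self _,
            Finset.mem_union_left _ (Finset.mem_erase.2 ⟨hbu, h2⟩)⟩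
    · exact ⟨p, Finset.mem_union_left _ (Finset.mem_sdiff.2 ⟨hp, hpQ⟩), hcr⟩
  have base_cov_ux1 : (∃ p ∈ Q, p.1 = ({u} : Finset V) ∨ p.2 = ({u} : Finset V)) →
      ∃ p ∈ base, cro p u x₁ := by
    rintro ⟨q, hq, hside⟩
    refine ⟨tmap q, Finset.mem_union_right _ (Finset.mem_image_of_mem _ hq), ?_⟩
    rcases tm q hq with ⟨he1, he, _⟩ | ⟨_, he1, he, _⟩ | ⟨hne1, hne2, _, _, _⟩ |
      ⟨hne1, hne2, _, _, _, _⟩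
    · rw [he]
      exact Or.inl ⟨Finset.mem_singleton_self _,
        Finset.mem_union_right _ (Finset.mem_singleton_self _)⟩
    · rw [he]
      exact Or.inr ⟨Finset.mem_singleton_self _,
        Finset.mem_union_right _ (Finset.mem_singleton_self _)⟩
    · rcases hside with e | e
      · exact absurd e hne1
      · exact absurd e hne2
    · rcases hside with e | e
      · exact absurd e hne1
      · exact absurd e hne2
  have base_cov_x2v : (∃ p ∈ Q, ¬(p.1 = ({u} : Finset V) ∨ p.2 = ({u} : Finset V))) →
      ∃ p ∈ base, cro p x₂ v := by
    rintro ⟨q, hq, hside⟩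
    refine ⟨tmap q, Finset.mem_union_right _ (Finset.mem_image_of_mem _ hq), ?_⟩
    rcases tm q hq with ⟨he1, _, _⟩ | ⟨_, he1, _, _⟩ | ⟨_, _, _, he, _⟩ |
      ⟨_, _, _, _, he, _⟩
    · exact absurd (Or.inl he1) hside
    · exact absurd (Or.inr he1) hside
    · rw [he]
      exact Or.inr ⟨Finset.mem_union_right _ (Finset.mem_singleton_self _),
        Finset.mem_singleton_self _⟩
    · rw [he]
      exact Or.inl ⟨Finset.mem_union_right _ (Finset.mem_singleton_self _),
        Finset.mem_singleton_self _⟩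
  have mk_cover : ∀ E : Finset (Finset V × Finset V),
      (∀ p ∈ E, p.1.Nonempty ∧ p.2.Nonempty) →
      (∀ p ∈ E, ∀ a b, cro p a b → G.Adj a b) →
      (∃ p ∈ base ∪ E, cro p u x₁) →
      (∃ p ∈ base ∪ E, cro p x₁ x₂) →
      (∃ p ∈ base ∪ E, cro p x₂ v) →
      G.IsCover (base ∪ E) := by
    intro E hEne hEval hc1 hc2 hc3
    constructor
    · intro p hp
      rcases Finset.mem_union.1 hp with hp | hp
      · exact base_ne p hp
      · exact hEne p hp
    · intro a b
      constructor
      · intro hadj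
        by_cases ha1 : a = x₁
        · subst ha1
          rcases (n1 b).1 hadj with rfl | rfl
          · obtain ⟨p, hp, hc⟩ := hc1
            exact ⟨p, hp, cro_symm hc⟩
          · exact hc2
        by_cases ha2 : a = x₂
        · subst ha2
          rcases (n2 b).1 hadj with rfl | rfl
          · obtain ⟨p, hp, hc⟩ := hc2
            exact ⟨p, hp, cro_symm hc⟩
          · exact hc3
        by_cases hb1 : b = x₁
        · subst hb1
          rcases adjy1 a hadj with rfl | rfl
          · exact hc1
          · exact absurd rfl ha2
        by_cases hb2 : b = x₂
        · subst hb2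
          rcases (n2 a).1 (G.symm _ _ hadj) with rfl | rfl
          · exact absurd rfl ha1
          · obtain ⟨p, hp, hc⟩ := hc3
            exact ⟨p, hp, cro_symm hc⟩
        · obtain ⟨p, hp, hc⟩ := base_cov_inner a b ha1 ha2 hb1 hb2 hadj
          exact ⟨p, Finset.mem_union_left _ hp, hc⟩
      · rintro ⟨p, hp, hc⟩
        rcases Finset.mem_union.1 hp with hp | hp
        · exact base_val p hp a b hc
        · exact hEval p hp a b hc
  -- counting infrastructure
  have uAdjAll : ∀ S : Finset V,
      (∃ q ∈ Q, (q.1 = ({u} : Finset V) ∧ q.2 = S) ∨ (q.2 = ({u} : Finset V) ∧ q.1 = S)) →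
      (∀ s ∈ S, A2 G u v u s) ∧ v ∈ S := by
    rintro S ⟨q, hq, ⟨e1, e2⟩ | ⟨e1, e2⟩⟩
    · constructor
      · intro s hs
        exact hDval q (hQD hq) u (by rw [e1]; exact Finset.mem_singleton_self u) s
          (by rw [e2]; exact hs)
      · obtain ⟨-, hcr⟩ := (hQmem q).1 hq
        rcases hcr with ⟨h1, h2⟩ | ⟨h1, h2⟩
        · exact e2 ▸ h2
        · rw [e1, Finset.mem_singleton] at h2
          rw [h2]
          exact e2 ▸ h1
    · constructor
      · intro s hs
        exact A2sy _ _ (hDval q (hQD hq) s (by rw [e2]; exact hs) u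
          (by rw [e1]; exact Finset.mem_singleton_self u))
      · obtain ⟨-, hcr⟩ := (hQmem q).1 hq
        rcases hcr with ⟨h1, h2⟩ | ⟨h1, h2⟩
        · rw [e1, Finset.mem_singleton] at h2
          rw [h2]
          exact e2 ▸ h1
        · exact e2 ▸ h2
  have vAdjAll : ∀ S : Finset V,
      (∃ q ∈ Q, (q.1 = ({v} : Finset V) ∧ q.2 = S) ∨ (q.2 = ({v} : Finset V) ∧ q.1 = S)) →
      (∀ s ∈ S, A2 G u v v s) ∧ u ∈ S := by
    rintro S ⟨q, hq, ⟨e1, e2⟩ | ⟨e1, e2⟩⟩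
    · constructor
      · intro s hs
        exact hDval q (hQD hq) v (by rw [e1]; exact Finset.mem_singleton_self v) s
          (by rw [e2]; exact hs)
      · obtain ⟨-, hcr⟩ := (hQmem q).1 hq
        rcases hcr with ⟨h1, h2⟩ | ⟨h1, h2⟩
        · rw [e1, Finset.mem_singleton] at h1
          rw [h1]
          exact e2 ▸ h2
        · exact e2 ▸ h1
    · constructor
      · intro s hs
        exact A2sy _ _ (hDval q (hQD hq) s (by rw [e2]; exact hs) v
          (by rw [e1]; exact Finset.mem_singleton_self v))
      · obtain ⟨-, hcr⟩ := (hQmem q).1 hq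
        rcases hcr with ⟨h1, h2⟩ | ⟨h1, h2⟩
        · exact e2 ▸ h1
        · rw [e1, Finset.mem_singleton] at h1
          rw [h1]
          exact e2 ▸ h2
  set RB := (sjComponents D).filter (fun S => ((u ∈ S ∧ S ≠ {u}) ∨ (v ∈ S ∧ S ≠ {v})) ∧
    ∃ q ∈ Q, q.1 = S ∨ q.2 = S) with hRBdef
  have memRB : ∀ S, S ∈ RB ↔ S ∈ sjComponents D ∧
      (((u ∈ S ∧ S ≠ {u}) ∨ (v ∈ S ∧ S ≠ {v})) ∧ ∃ q ∈ Q, q.1 = S ∨ q.2 = S) := by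
    intro S
    rw [hRBdef, Finset.mem_filter]
  have RBsub : RB ⊆ sjComponents D := by
    intro S hS
    exact ((memRB S).1 hS).1
  have RBne : ∀ S ∈ RB, S ≠ ({u} : Finset V) ∧ S ≠ ({v} : Finset V) := by
    intro S hS
    obtain ⟨-, hbig, -⟩ := (memRB S).1 hS
    constructor
    · rintro rfl
      rcases hbig with ⟨_, hne⟩ | ⟨hv', hne⟩
      · exact hne rfl
      · rw [Finset.mem_singleton] at hv'
        exact hne (by rw [hv'])
    · rintro rfl
      rcases hbig with ⟨hu', hne⟩ | ⟨_, hne⟩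
      · rw [Finset.mem_singleton] at hu'
        exact hne (by rw [hu'])
      · exact hne rfl
  have hasne : ∀ (S : Finset V) (z : V), S.Nonempty → S ≠ {z} → ∃ w ∈ S, w ≠ z := by
    intro S z hSne hne
    by_cases hz : z ∈ S
    · have hns : ¬ S ⊆ {z} := fun hsub =>
        hne (Finset.Subset.antisymm hsub (Finset.singleton_subset_iff.2 hz))
      obtain ⟨w, hw, hw2⟩ := Finset.not_subset.1 hns
      rw [Finset.mem_singleton] at hw2
      exact ⟨w, hw, hw2⟩
    · obtain ⟨w, hw⟩ := hSne
      exact ⟨w, hw, fun e => hz (e ▸ hw)⟩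
  have compsD_ne : ∀ S ∈ sjComponents D, S.Nonempty := by
    intro S hS
    rw [mem_sjComponents] at hS
    obtain ⟨p, hp, hside⟩ := hS
    rcases hside with rfl | rfl
    · exact (hDne p hp).1
    · exact (hDne p hp).2
  have q2 : ∀ S ∈ RB, ∀ p ∈ D, (p.1 = S ∨ p.2 = S) → p ∈ Q := by
    intro S hSRB p hp hside
    obtain ⟨hSD, hbig, q', hq', hq'side⟩ := (memRB S).1 hSRB
    have hSne : S.Nonempty := compsD_ne S hSD
    have hSnu := (RBne S hSRB).1
    have hSnv := (RBne S hSRB).2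
    by_cases hc : ∃ q ∈ Q, (q.1 = ({u} : Finset V) ∧ q.2 = S) ∨
        (q.2 = ({u} : Finset V) ∧ q.1 = S)
    · obtain ⟨hall, hvS⟩ := uAdjAll S hc
      obtain ⟨w, hwS, hwv⟩ := hasne S v hSne hSnv
      rw [hQmem]
      refine ⟨hp, ?_⟩
      by_contra hnc
      rcases hside with e | e
      · obtain ⟨t, ht⟩ := (hDne p hp).2
        have htu : t ≠ u := fun ee => hnc (Or.inr ⟨ee ▸ ht, e.symm ▸ hvS⟩)
        have havt := hDav p hp t (Or.inr ht)
        have havw := hDav p hp w (Or.inl (e.symm ▸ hwS))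
        exact hsc u t v w hu1 hu2 havt.1 havt.2 hv1 hv2 havw.1 havw.2
          (Ne.symm htu) (Ne.symm hwv) hA2uv (hall w hwS)
          (A2sy _ _ (hDval p hp v (e.symm ▸ hvS) t ht))
          (A2sy _ _ (hDval p hp w (e.symm ▸ hwS) t ht))
      · obtain ⟨t, ht⟩ := (hDne p hp).1
        have htu : t ≠ u := fun ee => hnc (Or.inl ⟨ee ▸ ht, e.symm ▸ hvS⟩)
        have havt := hDav p hp t (Or.inl ht)
        have havw := hDav p hp w (Or.inr (e.symm ▸ hwS))
        exact hsc u t v w hu1 hu2 havt.1 havt.2 hv1 hv2 havw.1 havw.2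
          (Ne.symm htu) (Ne.symm hwv) hA2uv (hall w hwS)
          (hDval p hp t ht v (e.symm ▸ hvS))
          (hDval p hp t ht w (e.symm ▸ hwS))
    · have hcv : ∃ q ∈ Q, (q.1 = ({v} : Finset V) ∧ q.2 = S) ∨
          (q.2 = ({v} : Finset V) ∧ q.1 = S) := by
        rcases tm q' hq' with ⟨he1, _, _⟩ | ⟨_, he1, _, _⟩ | ⟨_, _, he1, _, _⟩ |
          ⟨_, _, _, he1, _, _⟩
        · rcases hq'side with e | e
          · exact absurd (e.symm.trans he1) hSnu
          · exact absurd ⟨q', hq', Or.inl ⟨he1, e⟩⟩ hc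
        · rcases hq'side with e | e
          · exact absurd ⟨q', hq', Or.inr ⟨he1, e⟩⟩ hc
          · exact absurd (e.symm.trans he1) hSnu
        · rcases hq'side with e | e
          · exact absurd (e.symm.trans he1) hSnv
          · exact ⟨q', hq', Or.inl ⟨he1, e⟩⟩
        · rcases hq'side with e | e
          · exact ⟨q', hq', Or.inr ⟨he1, e⟩⟩
          · exact absurd (e.symm.trans he1) hSnv
      obtain ⟨hallv, huS⟩ := vAdjAll S hcv
      obtain ⟨w, hwS, hwu⟩ := hasne S u hSne hSnu
      rw [hQmem]
      refine ⟨hp, ?_⟩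
      by_contra hnc
      rcases hside with e | e
      · obtain ⟨t, ht⟩ := (hDne p hp).2
        have htv : t ≠ v := fun ee => hnc (Or.inl ⟨e.symm ▸ huS, ee ▸ ht⟩)
        have havt := hDav p hp t (Or.inr ht)
        have havw := hDav p hp w (Or.inl (e.symm ▸ hwS))
        exact hsc v t u w hv1 hv2 havt.1 havt.2 hu1 hu2 havw.1 havw.2
          (Ne.symm htv) (Ne.symm hwu) (Or.inr (Or.inr ⟨rfl, rfl⟩)) (hallv w hwS)
          (A2sy _ _ (hDval p hp u (e.symm ▸ huS) t ht))
          (A2sy _ _ (hDval p hp w (e.symm ▸ hwS) t ht))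
      · obtain ⟨t, ht⟩ := (hDne p hp).1
        have htv : t ≠ v := fun ee => hnc (Or.inr ⟨e.symm ▸ huS, ee ▸ ht⟩)
        have havt := hDav p hp t (Or.inl ht)
        have havw := hDav p hp w (Or.inr (e.symm ▸ hwS))
        exact hsc v t u w hv1 hv2 havt.1 havt.2 hu1 hu2 havw.1 havw.2
          (Ne.symm htv) (Ne.symm hwu) (Or.inr (Or.inr ⟨rfl, rfl⟩)) (hallv w hwS)
          (hDval p hp t ht u (e.symm ▸ huS))
          (hDval p hp t ht w (e.symm ▸ hwS))
  set msw : Finset V → Finset V := fun S =>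
    if ∃ q ∈ Q, (q.1 = ({u} : Finset V) ∧ q.2 = S) ∨ (q.2 = ({u} : Finset V) ∧ q.1 = S)
    then S.erase v ∪ {x₁} else S.erase u ∪ {x₂} with hmswdef
  set BS := RB.image msw with hBSdef
  have comps_base : ∀ S ∈ sjComponents base,
      (S ∈ (sjComponents D) \ RB ∪ BS) ∨
      (S = ({x₁} : Finset V) ∧ ∃ q ∈ Q, (q.1 = ({u} : Finset V) ∧ q.2 = ({v} : Finset V)) ∨
        (q.2 = ({u} : Finset V) ∧ q.1 = ({v} : Finset V))) := by
    intro S hS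
    rw [hbasedef, sjComponents_union] at hS
    rcases Finset.mem_union.1 hS with hS | hS
    · left
      apply Finset.mem_union_left
      rw [Finset.mem_sdiff]
      rw [mem_sjComponents] at hS
      obtain ⟨p, hp, hside⟩ := hS
      have hpD : p ∈ D := (Finset.mem_sdiff.1 hp).1
      have hpnQ := (Finset.mem_sdiff.1 hp).2
      refine ⟨mem_sjComponents.2 ⟨p, hpD, hside⟩, ?_⟩
      intro hSRB
      exact hpnQ (q2 S hSRB p hpD hside)
    · rw [mem_sjComponents] at hS
      obtain ⟨p', hp', hside⟩ := hS
      rw [Finset.mem_image] at hp'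
      obtain ⟨q, hq, rfl⟩ := hp'
      have hqD := hQD hq
      rcases tm q hq with ⟨he1, he, hv2'⟩ | ⟨hne1, he1, he, hv2'⟩ |
        ⟨hne1, hne2, he1, he, hu2'⟩ | ⟨hne1, hne2, hne3, he1, he, hu2'⟩ <;>
        rw [he] at hside
      · rcases hside with e | e
        · left
          apply Finset.mem_union_left
          rw [Finset.mem_sdiff]
          refine ⟨mem_sjComponents.2 ⟨q, hqD, Or.inl (he1.trans e)⟩, ?_⟩
          intro hRB
          exact (RBne _ hRB).1 e.symm
        · by_cases hq2v : q.2 = ({v} : Finset V)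
          · right
            refine ⟨?_, q, hq, Or.inl ⟨he1, hq2v⟩⟩
            rw [← e, hq2v]
            simp [Finset.erase_singleton]
          · left
            apply Finset.mem_union_right
            rw [hBSdef]
            have hq2RB : q.2 ∈ RB := by
              rw [memRB]
              exact ⟨mem_sjComponents.2 ⟨q, hqD, Or.inr rfl⟩, Or.inr ⟨hv2', hq2v⟩,
                q, hq, Or.inr rfl⟩
            refine Finset.mem_image.2 ⟨q.2, hq2RB, ?_⟩
            simp only [hmswdef]
            rw [if_pos ⟨q, hq, Or.inl ⟨he1, rfl⟩⟩]
            exact e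
      · rcases hside with e | e
        · by_cases hq1v : q.1 = ({v} : Finset V)
          · right
            refine ⟨?_, q, hq, Or.inr ⟨he1, hq1v⟩⟩
            rw [← e, hq1v]
            simp [Finset.erase_singleton]
          · left
            apply Finset.mem_union_right
            rw [hBSdef]
            have hq1RB : q.1 ∈ RB := by
              rw [memRB]
              exact ⟨mem_sjComponents.2 ⟨q, hqD, Or.inl rfl⟩, Or.inr ⟨hv2', hq1v⟩,
                q, hq, Or.inl rfl⟩
            refine Finset.mem_image.2 ⟨q.1, hq1RB, ?_⟩
            simp only [hmswdef]
            rw [if_pos ⟨q, hq, Or.inr ⟨he1, rfl⟩⟩]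
            exact e
        · left
          apply Finset.mem_union_left
          rw [Finset.mem_sdiff]
          refine ⟨mem_sjComponents.2 ⟨q, hqD, Or.inr (he1.trans e)⟩, ?_⟩
          intro hRB
          exact (RBne _ hRB).1 e.symm
      · have huvne : u ≠ v := by
          intro ee
          exact hne1 (by rw [ee]; exact he1)
        rcases hside with e | e
        · left
          apply Finset.mem_union_left
          rw [Finset.mem_sdiff]
          refine ⟨mem_sjComponents.2 ⟨q, hqD, Or.inl (he1.trans e)⟩, ?_⟩
          intro hRB
          exact (RBne _ hRB).2 e.symm
        · left
          apply Finset.mem_union_right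
          rw [hBSdef]
          have hq2RB : q.2 ∈ RB := by
            rw [memRB]
            exact ⟨mem_sjComponents.2 ⟨q, hqD, Or.inr rfl⟩, Or.inl ⟨hu2', hne2⟩,
              q, hq, Or.inr rfl⟩
          refine Finset.mem_image.2 ⟨q.2, hq2RB, ?_⟩
          have hnc : ¬ ∃ q'' ∈ Q, (q''.1 = ({u} : Finset V) ∧ q''.2 = q.2) ∨
              (q''.2 = ({u} : Finset V) ∧ q''.1 = q.2) := by
            intro hcc
            obtain ⟨hallu, hvq2⟩ := uAdjAll q.2 hcc
            obtain ⟨hallv, huq2⟩ := vAdjAll q.2 ⟨q, hq, Or.inl ⟨he1, rfl⟩⟩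
            exact hsc u v u v hu1 hu2 hv1 hv2 hu1 hu2 hv1 hv2 huvne huvne
              (hallu u huq2) hA2uv (Or.inr (Or.inr ⟨rfl, rfl⟩)) (hallv v hvq2)
          simp only [hmswdef]
          rw [if_neg hnc]
          exact e
      · have huvne : u ≠ v := by
          intro ee
          exact hne2 (by rw [ee]; exact he1)
        rcases hside with e | e
        · left
          apply Finset.mem_union_right
          rw [hBSdef]
          have hq1RB : q.1 ∈ RB := by
            rw [memRB]
            exact ⟨mem_sjComponents.2 ⟨q, hqD, Or.inl rfl⟩, Or.inl ⟨hu2', hne1⟩,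
              q, hq, Or.inl rfl⟩
          refine Finset.mem_image.2 ⟨q.1, hq1RB, ?_⟩
          have hnc : ¬ ∃ q'' ∈ Q, (q''.1 = ({u} : Finset V) ∧ q''.2 = q.1) ∨
              (q''.2 = ({u} : Finset V) ∧ q''.1 = q.1) := by
            intro hcc
            obtain ⟨hallu, hvq1⟩ := uAdjAll q.1 hcc
            obtain ⟨hallv, huq1⟩ := vAdjAll q.1 ⟨q, hq, Or.inr ⟨he1, rfl⟩⟩
            exact hsc u v u v hu1 hu2 hv1 hv2 hu1 hu2 hv1 hv2 huvne huvne
              (hallu u huq1) hA2uv (Or.inr (Or.inr ⟨rfl, rfl⟩)) (hallv v hvq1)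
          simp only [hmswdef]
          rw [if_neg hnc]
          exact e
        · left
          apply Finset.mem_union_left
          rw [Finset.mem_sdiff]
          refine ⟨mem_sjComponents.2 ⟨q, hqD, Or.inr (he1.trans e)⟩, ?_⟩
          intro hRB
          exact (RBne _ hRB).2 e.symm
  have finisher : ∀ E : Finset (Finset V × Finset V), ∀ AD : Finset (Finset V),
      G.IsCover (base ∪ E) → AD.card ≤ 2 →
      (∀ S ∈ sjComponents (base ∪ E), S ∈ ((sjComponents D) \ RB ∪ BS) ∪ AD) →
      ∃ C, G.IsCover C ∧ (sjComponents C).card ≤ (sjComponents D).card + 2 := by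
    intro E AD hcov hADle hsub
    refine ⟨base ∪ E, hcov, ?_⟩
    have h1 : (sjComponents (base ∪ E)).card ≤ (((sjComponents D) \ RB ∪ BS) ∪ AD).card :=
      Finset.card_le_card (fun S hS => hsub S hS)
    have h2a : (((sjComponents D) \ RB ∪ BS) ∪ AD).card ≤
        ((sjComponents D) \ RB ∪ BS).card + AD.card := Finset.card_union_le _ _
    have h2b : ((sjComponents D) \ RB ∪ BS).card ≤
        ((sjComponents D) \ RB).card + BS.card := Finset.card_union_le _ _
    have h3 : ((sjComponents D) \ RB).card = (sjComponents D).card - RB.card :=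
      Finset.card_sdiff_of_subset RBsub
    have h4 : BS.card ≤ RB.card := by
      rw [hBSdef]
      exact Finset.card_image_le
    have h5 : RB.card ≤ (sjComponents D).card := Finset.card_le_card RBsub
    omega
  by_cases Qu : ∃ p ∈ Q, p.1 = ({u} : Finset V) ∨ p.2 = ({u} : Finset V)
  · by_cases Qv : ∃ p ∈ Q, ¬(p.1 = ({u} : Finset V) ∨ p.2 = ({u} : Finset V))
    · -- case A
      refine finisher {(({x₁} : Finset V), ({x₂} : Finset V))}
        {({x₁} : Finset V), ({x₂} : Finset V)} (mk_cover _ ?_ ?_ ?_ ?_ ?_) ?_ ?_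
      · intro p hp
        rw [Finset.mem_singleton] at hp
        subst hp
        exact ⟨⟨x₁, Finset.mem_singleton_self _⟩, ⟨x₂, Finset.mem_singleton_self _⟩⟩
      · intro p hp a b hcr
        rw [Finset.mem_singleton] at hp
        subst hp
        rcases hcr with ⟨h1, h2⟩ | ⟨h1, h2⟩
        · have e1 := Finset.mem_singleton.1 h1
          have e2 := Finset.mem_singleton.1 h2
          subst e1; subst e2
          exact a2
        · have e1 := Finset.mem_singleton.1 h1
          have e2 := Finset.mem_singleton.1 h2
          subst e1; subst e2
          exact G.symm _ _ a2
      · obtain ⟨p, hp, hc⟩ := base_cov_ux1 Qu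
        exact ⟨p, Finset.mem_union_left _ hp, hc⟩
      · exact ⟨(({x₁} : Finset V), ({x₂} : Finset V)),
          Finset.mem_union_right _ (Finset.mem_singleton_self _),
          Or.inl ⟨Finset.mem_singleton_self _, Finset.mem_singleton_self _⟩⟩
      · obtain ⟨p, hp, hc⟩ := base_cov_x2v Qv
        exact ⟨p, Finset.mem_union_left _ hp, hc⟩
      · refine le_trans (Finset.card_insert_le _ _) ?_
        rw [Finset.card_singleton]
      · intro S hS
        rw [sjComponents_union] at hS
        rcases Finset.mem_union.1 hS with hS | hS
        · rcases comps_base S hS with h' | ⟨rfl, -⟩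
          · exact Finset.mem_union_left _ h'
          · exact Finset.mem_union_right _ (Finset.mem_insert_self _ _)
        · rw [mem_sjComponents] at hS
          obtain ⟨p, hp, hside⟩ := hS
          rw [Finset.mem_singleton] at hp
          subst hp
          apply Finset.mem_union_right
          rcases hside with e | e
          · exact Finset.mem_insert.2 (Or.inl e.symm)
          · exact Finset.mem_insert.2 (Or.inr (Finset.mem_singleton.2 e.symm))
    · by_cases Qpure : ∃ p ∈ Q, (p.1 = ({u} : Finset V) ∧ p.2 = ({v} : Finset V)) ∨
          (p.2 = ({u} : Finset V) ∧ p.1 = ({v} : Finset V))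
      · -- case B1
        have hvD : ({v} : Finset V) ∈ sjComponents D := by
          obtain ⟨qp, hqp, hpure⟩ := Qpure
          rcases hpure with ⟨e1', e2'⟩ | ⟨e1', e2'⟩
          · exact mem_sjComponents.2 ⟨qp, hQD hqp, Or.inr e2'⟩
          · exact mem_sjComponents.2 ⟨qp, hQD hqp, Or.inl e2'⟩
        have hvRB : ({v} : Finset V) ∉ RB := fun hh => (RBne _ hh).2 rfl
        refine finisher {(({x₂} : Finset V), ({v} : Finset V)),
            (({x₁} : Finset V), ({x₂} : Finset V))}
          {({x₁} : Finset V), ({x₂} : Finset V)} (mk_cover _ ?_ ?_ ?_ ?_ ?_) ?_ ?_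
        · intro p hp
          rcases Finset.mem_insert.1 hp with rfl | hp
          · exact ⟨⟨x₂, Finset.mem_singleton_self _⟩, ⟨v, Finset.mem_singleton_self _⟩⟩
          · rw [Finset.mem_singleton] at hp
            subst hp
            exact ⟨⟨x₁, Finset.mem_singleton_self _⟩, ⟨x₂, Finset.mem_singleton_self _⟩⟩
        · intro p hp a b hcr
          rcases Finset.mem_insert.1 hp with rfl | hp
          · rcases hcr with ⟨h1, h2⟩ | ⟨h1, h2⟩
            · have e1 := Finset.mem_singleton.1 h1
              have e2 := Finset.mem_singleton.1 h2
              subst e1; subst e2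
              exact a3
            · have e1 := Finset.mem_singleton.1 h1
              have e2 := Finset.mem_singleton.1 h2
              subst e1; subst e2
              exact G.symm _ _ a3
          · rw [Finset.mem_singleton] at hp
            subst hp
            rcases hcr with ⟨h1, h2⟩ | ⟨h1, h2⟩
            · have e1 := Finset.mem_singleton.1 h1
              have e2 := Finset.mem_singleton.1 h2
              subst e1; subst e2
              exact a2
            · have e1 := Finset.mem_singleton.1 h1
              have e2 := Finset.mem_singleton.1 h2
              subst e1; subst e2
              exact G.symm _ _ a2
        · obtain ⟨p, hp, hc⟩ := base_cov_ux1 Qu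
          exact ⟨p, Finset.mem_union_left _ hp, hc⟩
        · exact ⟨(({x₁} : Finset V), ({x₂} : Finset V)),
            Finset.mem_union_right _ (Finset.mem_insert_of_mem (Finset.mem_singleton_self _)),
            Or.inl ⟨Finset.mem_singleton_self _, Finset.mem_singleton_self _⟩⟩
        · exact ⟨(({x₂} : Finset V), ({v} : Finset V)),
            Finset.mem_union_right _ (Finset.mem_insert_self _ _),
            Or.inl ⟨Finset.mem_singleton_self _, Finset.mem_singleton_self _⟩⟩
        · refine le_trans (Finset.card_insert_le _ _) ?_
          rw [Finset.card_singleton]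
        · intro S hS
          rw [sjComponents_union] at hS
          rcases Finset.mem_union.1 hS with hS | hS
          · rcases comps_base S hS with h' | ⟨rfl, -⟩
            · exact Finset.mem_union_left _ h'
            · exact Finset.mem_union_right _ (Finset.mem_insert_self _ _)
          · rw [mem_sjComponents] at hS
            obtain ⟨p, hp, hside⟩ := hS
            rcases Finset.mem_insert.1 hp with rfl | hp
            · rcases hside with e | e
              · exact Finset.mem_union_right _
                  (Finset.mem_insert.2 (Or.inr (Finset.mem_singleton.2 e.symm)))
              · refine Finset.mem_union_left _ (Finset.mem_union_left _ ?_)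
                rw [Finset.mem_sdiff]
                rw [← e]
                exact ⟨hvD, hvRB⟩
            · rw [Finset.mem_singleton] at hp
              subst hp
              apply Finset.mem_union_right
              rcases hside with e | e
              · exact Finset.mem_insert.2 (Or.inl e.symm)
              · exact Finset.mem_insert.2 (Or.inr (Finset.mem_singleton.2 e.symm))
      · -- case B2
        refine finisher {(({x₂} : Finset V), ({x₁, v} : Finset V))}
          {({x₂} : Finset V), ({x₁, v} : Finset V)} (mk_cover _ ?_ ?_ ?_ ?_ ?_) ?_ ?_
        · intro p hp
          rw [Finset.mem_singleton] at hp
          subst hp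
          exact ⟨⟨x₂, Finset.mem_singleton_self _⟩, ⟨x₁, Finset.mem_insert_self _ _⟩⟩
        · intro p hp a b hcr
          rw [Finset.mem_singleton] at hp
          subst hp
          rcases hcr with ⟨h1, h2⟩ | ⟨h1, h2⟩
          · have e1 := Finset.mem_singleton.1 h1
            subst e1
            rcases Finset.mem_insert.1 h2 with rfl | h2
            · exact G.symm _ _ a2
            · have e2 := Finset.mem_singleton.1 h2
              subst e2
              exact a3
          · have e2 := Finset.mem_singleton.1 h2
            subst e2
            rcases Finset.mem_insert.1 h1 with rfl | h1
            · exact a2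
            · have e1 := Finset.mem_singleton.1 h1
              subst e1
              exact G.symm _ _ a3
        · obtain ⟨p, hp, hc⟩ := base_cov_ux1 Qu
          exact ⟨p, Finset.mem_union_left _ hp, hc⟩
        · exact ⟨(({x₂} : Finset V), ({x₁, v} : Finset V)),
            Finset.mem_union_right _ (Finset.mem_singleton_self _),
            Or.inr ⟨Finset.mem_insert_self _ _, Finset.mem_singleton_self _⟩⟩
        · exact ⟨(({x₂} : Finset V), ({x₁, v} : Finset V)),
            Finset.mem_union_right _ (Finset.mem_singleton_self _),
            Or.inl ⟨Finset.mem_singleton_self _,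
              Finset.mem_insert_of_mem (Finset.mem_singleton_self _)⟩⟩
        · refine le_trans (Finset.card_insert_le _ _) ?_
          rw [Finset.card_singleton]
        · intro S hS
          rw [sjComponents_union] at hS
          rcases Finset.mem_union.1 hS with hS | hS
          · rcases comps_base S hS with h' | ⟨rfl, hpure⟩
            · exact Finset.mem_union_left _ h'
            · exact absurd hpure Qpure
          · rw [mem_sjComponents] at hS
            obtain ⟨p, hp, hside⟩ := hS
            rw [Finset.mem_singleton] at hp
            subst hp
            apply Finset.mem_union_right
            rcases hside with e | e
            · exact Finset.mem_insert.2 (Or.inl e.symm)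
            · exact Finset.mem_insert.2 (Or.inr (Finset.mem_singleton.2 e.symm))
  · -- case C
    have hQv : ∃ p ∈ Q, ¬(p.1 = ({u} : Finset V) ∨ p.2 = ({u} : Finset V)) :=
      ⟨q0, hq0, fun hh => Qu ⟨q0, hq0, hh⟩⟩
    refine finisher {(({x₁} : Finset V), ({u, x₂} : Finset V))}
      {({x₁} : Finset V), ({u, x₂} : Finset V)} (mk_cover _ ?_ ?_ ?_ ?_ ?_) ?_ ?_
    · intro p hp
      rw [Finset.mem_singleton] at hp
      subst hp
      exact ⟨⟨x₁, Finset.mem_singleton_self _⟩, ⟨u, Finset.mem_insert_self _ _⟩⟩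
    · intro p hp a b hcr
      rw [Finset.mem_singleton] at hp
      subst hp
      rcases hcr with ⟨h1, h2⟩ | ⟨h1, h2⟩
      · have e1 := Finset.mem_singleton.1 h1
        subst e1
        rcases Finset.mem_insert.1 h2 with rfl | h2
        · exact G.symm _ _ a1
        · have e2 := Finset.mem_singleton.1 h2
          subst e2
          exact a2
      · have e2 := Finset.mem_singleton.1 h2
        subst e2
        rcases Finset.mem_insert.1 h1 with rfl | h1
        · exact a1
        · have e1 := Finset.mem_singleton.1 h1
          subst e1
          exact G.symm _ _ a2
    · exact ⟨(({x₁} : Finset V), ({u, x₂} : Finset V)),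
        Finset.mem_union_right _ (Finset.mem_singleton_self _),
        Or.inr ⟨Finset.mem_insert_self _ _, Finset.mem_singleton_self _⟩⟩
    · exact ⟨(({x₁} : Finset V), ({u, x₂} : Finset V)),
        Finset.mem_union_right _ (Finset.mem_singleton_self _),
        Or.inl ⟨Finset.mem_singleton_self _,
          Finset.mem_insert_of_mem (Finset.mem_singleton_self _)⟩⟩
    · obtain ⟨p, hp, hc⟩ := base_cov_x2v hQv
      exact ⟨p, Finset.mem_union_left _ hp, hc⟩
    · refine le_trans (Finset.card_insert_le _ _) ?_
      rw [Finset.card_singleton]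
    · intro S hS
      rw [sjComponents_union] at hS
      rcases Finset.mem_union.1 hS with hS | hS
      · rcases comps_base S hS with h' | ⟨rfl, qp, hqp, hpure⟩
        · exact Finset.mem_union_left _ h'
        · rcases hpure with ⟨e1', -⟩ | ⟨e1', -⟩
          · exact absurd ⟨qp, hqp, Or.inl e1'⟩ Qu
          · exact absurd ⟨qp, hqp, Or.inr e1'⟩ Qu
      · rw [mem_sjComponents] at hS
        obtain ⟨p, hp, hside⟩ := hS
        rw [Finset.mem_singleton] at hp
        subst hp
        apply Finset.mem_union_right
        rcases hside with e | e
        · exact Finset.mem_insert.2 (Or.inl e.symm)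
        · exact Finset.mem_insert.2 (Or.inr (Finset.mem_singleton.2 e.symm))

end Stmt9

open Stmt9

/-- For a strongly C4-free `G` with a walk `u - x₁ - x₂ - v`
through distinct degree-2 vertices `x₁, x₂ ∉ {u, v}` (`u = v` allowed), if `G'`
is obtained by deleting `x₁, x₂` and adding the edge `{u,v}`, then
`gap G ≤ gap G'`, with equality when `G'` is also strongly C4-free. -/
theorem stmt_9 {V : Type*} [Fintype V] [DecidableEq V] (G : LoopGraph V)
    (hG : G.StronglyC4Free) (u v x₁ x₂ : V)
    (hx : x₁ ≠ x₂) (hx₁u : x₁ ≠ u) (hx₁v : x₁ ≠ v) (hx₂u : x₂ ≠ u) (hx₂v : x₂ ≠ v)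
    (h1 : G.Adj u x₁) (h2 : G.Adj x₁ x₂) (h3 : G.Adj x₂ v)
    (hd1 : G.deg x₁ = 2) (hd2 : G.deg x₂ = 2) :
    G.gap ≤ (modGraph G u v x₁ x₂).gap ∧
    ((modGraph G u v x₁ x₂).StronglyC4Free → G.gap = (modGraph G u v x₁ x₂).gap) := by
  have h := facts_mk G hG u v x₁ x₂ hx hx₁u hx₁v hx₂u hx₂v h1 h2 h3 hd1 hd2
  have key1 : (modGraph G u v x₁ x₂).stp + 2 ≤ G.stp := by
    obtain ⟨C, hC, hcard⟩ := stp_attained G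
    obtain ⟨D, hD, hle⟩ := core1 h hC
    have := stp_le_of_vcover G hD
    omega
  have hcard2 : Fintype.card {x // x ∈ ({x₁, x₂}ᶜ : Finset V)} = Fintype.card V - 2 := by
    rw [Fintype.card_coe, Finset.card_compl]
    congr 1
    rw [Finset.card_insert_of_notMem (by simp [hx]), Finset.card_singleton]
  constructor
  · show Fintype.card V - G.stp ≤ Fintype.card _ - (modGraph G u v x₁ x₂).stp
    rw [hcard2]
    omega
  · intro hsc
    have key2 : G.stp ≤ (modGraph G u v x₁ x₂).stp + 2 := by
      obtain ⟨C₂, hC₂, hcard⟩ := stp_attained (modGraph G u v x₁ x₂)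
      obtain ⟨D, hD, hle⟩ := vcover_of_cover G hC₂
      obtain ⟨C, hC, hle2⟩ := core2 h (a2_sc4 G hsc) hD
      have : G.stp ≤ (sjComponents C).card := Nat.sInf_le ⟨C, hC, rfl⟩
      omega
    show Fintype.card V - G.stp = Fintype.card _ - (modGraph G u v x₁ x₂).stp
    rw [hcard2]
    omega
end

section
/- For every strongly C4-free graph G there exists an optimal set-join cover C of G (i.e., achieving the minimum number of components) such that every vertex of G is of Type A, Type B, or Type C with respect to C. -/
open LoopGraph

attribute [local instance] Classical.propDecidable

variable {V : Type*} [Fintype V] [DecidableEq V]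

/-- The set-join `K ∨ L` belongs to the cover `C` (in either orientation). -/
def memSJ (K L : Finset V) (C : Finset (Finset V × Finset V)) : Prop :=
  (K, L) ∈ C ∨ (L, K) ∈ C

/-- `N^*_C[x]`: the neighbours of `x` that are not singleton components of `C`. -/
noncomputable def Nstar (G : LoopGraph V) (C : Finset (Finset V × Finset V)) (x : V) :
    Finset V :=
  Finset.univ.filter fun y => G.Adj x y ∧ ({y} : Finset V) ∉ sjComponents C

/-- `N^1_C[x]`: the neighbours of `x` that are singleton components of `C`. -/
noncomputable def None' (G : LoopGraph V) (C : Finset (Finset V × Finset V)) (x : V) :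
    Finset V :=
  Finset.univ.filter fun y => G.Adj x y ∧ ({y} : Finset V) ∈ sjComponents C

/-- `x` is of Type A with respect to `C`: `|N^*_C[x]| ≥ 2` and
`C[x] = {{x} ∨ N^*_C[x]} ∪ {{x} ∨ {v} : v ∈ N^1_C[x]}`. -/
def IsTypeA (G : LoopGraph V) (C : Finset (Finset V × Finset V)) (x : V) : Prop :=
  2 ≤ (Nstar G C x).card ∧
  memSJ ({x} : Finset V) (Nstar G C x) C ∧
  (∀ v ∈ None' G C x, memSJ ({x} : Finset V) ({v} : Finset V) C) ∧
  (∀ p ∈ C, (x ∈ p.1 ∨ x ∈ p.2) →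
    p = (({x} : Finset V), Nstar G C x) ∨ p = (Nstar G C x, ({x} : Finset V)) ∨
    ∃ v ∈ None' G C x,
      p = (({x} : Finset V), ({v} : Finset V)) ∨ p = (({v} : Finset V), ({x} : Finset V)))

/-- `x` is of Type B with respect to `C`: `N^*_C[x] = ∅` and
`C[x] = {{x} ∨ {v} : v ∈ N^1_C[x]}`. -/
def IsTypeB (G : LoopGraph V) (C : Finset (Finset V × Finset V)) (x : V) : Prop :=
  Nstar G C x = ∅ ∧
  (∀ v ∈ None' G C x, memSJ ({x} : Finset V) ({v} : Finset V) C) ∧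
  (∀ p ∈ C, (x ∈ p.1 ∨ x ∈ p.2) →
    ∃ v ∈ None' G C x,
      p = (({x} : Finset V), ({v} : Finset V)) ∨ p = (({v} : Finset V), ({x} : Finset V)))

/-- `x` is of Type C with respect to `C`: `x ∉ V₁(C)` and
`C[x] = {N^*_C[v] ∨ {v} : v ∈ N_G[x]}`. -/
def IsTypeC (G : LoopGraph V) (C : Finset (Finset V × Finset V)) (x : V) : Prop :=
  (({x} : Finset V) ∉ sjComponents C) ∧
  (∀ v, G.Adj x v → memSJ (Nstar G C v) ({v} : Finset V) C) ∧
  (∀ p ∈ C, (x ∈ p.1 ∨ x ∈ p.2) →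
    ∃ v, G.Adj x v ∧
      (p = (Nstar G C v, ({v} : Finset V)) ∨ p = (({v} : Finset V), Nstar G C v)))

lemma exists_closure (S : Finset V) (N : V → Finset V) :
    ∃ (T : Finset V) (w : V → V), S ⊆ T ∧
      (∀ v ∈ S, (N v \ T).card ≠ 1) ∧
      (∀ u ∈ T \ S, w u ∈ S ∧ u ∈ N (w u) ∧ N (w u) \ T = ∅) ∧
      Set.InjOn w ↑(T \ S) := by
  suffices h : ∀ (n : ℕ) (T : Finset V) (w : V → V), S ⊆ T →
      (∀ u ∈ T \ S, w u ∈ S ∧ u ∈ N (w u) ∧ N (w u) \ T = ∅) →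
      Set.InjOn w ↑(T \ S) →
      Fintype.card V - T.card ≤ n →
      ∃ (T' : Finset V) (w' : V → V), S ⊆ T' ∧
        (∀ v ∈ S, (N v \ T').card ≠ 1) ∧
        (∀ u ∈ T' \ S, w' u ∈ S ∧ u ∈ N (w' u) ∧ N (w' u) \ T' = ∅) ∧
        Set.InjOn w' ↑(T' \ S) by
    refine h (Fintype.card V) S id (subset_refl S) ?_ ?_ (Nat.sub_le _ _)
    · intro u hu; simp at hu
    · intro a ha; simp at ha
  intro n
  induction n with
  | zero =>
    intro T w hST hw hinj hn
    have hT : T = Finset.univ := by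
      apply Finset.eq_univ_of_card
      have := Finset.card_le_univ T
      omega
    refine ⟨T, w, hST, ?_, hw, hinj⟩
    intro v hv
    have : N v \ T = ∅ := Finset.eq_empty_iff_forall_notMem.mpr
      (fun x hx => (Finset.mem_sdiff.mp hx).2 (hT ▸ Finset.mem_univ x))
    rw [this]
    simp
  | succ n ih =>
    intro T w hST hw hinj hn
    by_cases hall : ∀ v ∈ S, (N v \ T).card ≠ 1
    · exact ⟨T, w, hST, hall, hw, hinj⟩
    · push_neg at hall
      obtain ⟨v0, hv0S, hcard⟩ := hall
      obtain ⟨u0, hu0⟩ := Finset.card_eq_one.mp hcard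
      have hu0mem : u0 ∈ N v0 \ T := by rw [hu0]; exact Finset.mem_singleton_self u0
      have hu0N : u0 ∈ N v0 := (Finset.mem_sdiff.mp hu0mem).1
      have hu0T : u0 ∉ T := (Finset.mem_sdiff.mp hu0mem).2
      have hu0S : u0 ∉ S := fun h => hu0T (hST h)
      have hkey : ∀ u ∈ insert u0 T \ S,
          (Function.update w u0 v0) u ∈ S ∧ u ∈ N ((Function.update w u0 v0) u) ∧
          N ((Function.update w u0 v0) u) \ insert u0 T = ∅ := by
        intro u hu
        rcases Finset.mem_sdiff.mp hu with ⟨hu1, hu2⟩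
        by_cases h : u = u0
        · subst h
          rw [Function.update_self]
          refine ⟨hv0S, hu0N, ?_⟩
          apply Finset.eq_empty_iff_forall_notMem.mpr
          intro x hx
          rcases Finset.mem_sdiff.mp hx with ⟨hx1, hx2⟩
          have : x ∈ N v0 \ T := Finset.mem_sdiff.mpr ⟨hx1, fun hxT => hx2 (Finset.mem_insert_of_mem hxT)⟩
          rw [hu0] at this
          have hx3 := Finset.mem_singleton.mp this
          rw [hx3] at hx2
          exact hx2 (Finset.mem_insert_self _ T)
        · rw [Function.update_of_ne h]
          have huTS : u ∈ T \ S := Finset.mem_sdiff.mpr ⟨(Finset.mem_insert.mp hu1).resolve_left h, hu2⟩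
          obtain ⟨h1, h2, h3⟩ := hw u huTS
          refine ⟨h1, h2, ?_⟩
          apply Finset.eq_empty_iff_forall_notMem.mpr
          intro x hx
          rcases Finset.mem_sdiff.mp hx with ⟨hx1, hx2⟩
          have : x ∈ N (w u) \ T := Finset.mem_sdiff.mpr ⟨hx1, fun hxT => hx2 (Finset.mem_insert_of_mem hxT)⟩
          rw [h3] at this
          exact absurd this (Finset.notMem_empty x)
      refine ih (insert u0 T) (Function.update w u0 v0) (hST.trans (Finset.subset_insert u0 T)) hkey ?_ ?_
      · intro u1 hu1 u2 hu2 heq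
        simp only [Finset.coe_sdiff, Set.mem_diff, Finset.mem_coe] at hu1 hu2
        have hmem : ∀ u, u ∈ (insert u0 T : Finset V) ∧ u ∉ S → u ≠ u0 → u ∈ T \ S := by
          intro u ⟨h1, h2⟩ h3
          exact Finset.mem_sdiff.mpr ⟨(Finset.mem_insert.mp h1).resolve_left h3, h2⟩
        by_cases h1 : u1 = u0 <;> by_cases h2 : u2 = u0
        · rw [h1, h2]
        · exfalso
          subst h1
          rw [Function.update_self, Function.update_of_ne h2] at heq
          have := (hw u2 (hmem u2 hu2 h2)).2.2
          rw [← heq, hu0] at this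
          exact absurd this (by simp)
        · exfalso
          subst h2
          rw [Function.update_self, Function.update_of_ne h1] at heq
          have := (hw u1 (hmem u1 hu1 h1)).2.2
          rw [heq, hu0] at this
          exact absurd this (by simp)
        · rw [Function.update_of_ne h1, Function.update_of_ne h2] at heq
          exact hinj (by simpa using hmem u1 hu1 h1) (by simpa using hmem u2 hu2 h2) heq
      · rw [Finset.card_insert_of_notMem hu0T]
        omega

lemma mem_sjComponents {D : Finset (Finset V × Finset V)} {M : Finset V} :
    M ∈ sjComponents D ↔ ∃ p ∈ D, p.1 = M ∨ p.2 = M := by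
  constructor
  · intro h
    rcases Finset.mem_union.mp h with h | h
    · obtain ⟨p, hp, he⟩ := Finset.mem_image.mp h
      exact ⟨p, hp, Or.inl he⟩
    · obtain ⟨p, hp, he⟩ := Finset.mem_image.mp h
      exact ⟨p, hp, Or.inr he⟩
  · rintro ⟨p, hp, h | h⟩
    · exact Finset.mem_union_left _ (Finset.mem_image.mpr ⟨p, hp, h⟩)
    · exact Finset.mem_union_right _ (Finset.mem_image.mpr ⟨p, hp, h⟩)

/-- Every strongly C4-free graph has an optimal set-join cover in
which every vertex is of Type A, Type B, or Type C (an ABC cover). -/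
theorem stmt_10 (G : LoopGraph V) (hG : G.StronglyC4Free) :
    ∃ C : Finset (Finset V × Finset V), G.IsCover C ∧
      (sjComponents C).card = G.stp ∧
      ∀ x : V, IsTypeA G C x ∨ IsTypeB G C x ∨ IsTypeC G C x := by
  classical
  rcases isEmpty_or_nonempty V with hV | hV
  · have hcov0 : G.IsCover ∅ := by
      constructor
      · intro p hp
        exact absurd hp (Finset.notMem_empty p)
      · intro u v
        exact (IsEmpty.false u).elim
    have h0 : G.stp = 0 := by
      apply Nat.eq_zero_of_le_zero
      apply Nat.sInf_le
      exact ⟨∅, hcov0, by simp [sjComponents]⟩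
    refine ⟨∅, hcov0, ?_, fun x => (IsEmpty.false x).elim⟩
    simp [sjComponents, h0]
  have hfull : G.IsCover (Finset.univ.filter
      (fun p : Finset V × Finset V => ∃ u v : V, G.Adj u v ∧ p = ({u}, {v}))) := by
    constructor
    · intro p hp
      rw [Finset.mem_filter] at hp
      obtain ⟨-, u, v, -, rfl⟩ := hp
      exact ⟨Finset.singleton_nonempty u, Finset.singleton_nonempty v⟩
    · intro u v
      constructor
      · intro h
        exact ⟨({u}, {v}), Finset.mem_filter.mpr ⟨Finset.mem_univ _, u, v, h, rfl⟩,
          Or.inl ⟨Finset.mem_singleton_self u, Finset.mem_singleton_self v⟩⟩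
      · rintro ⟨p, hp, hor⟩
        rw [Finset.mem_filter] at hp
        obtain ⟨-, a, b, hab, rfl⟩ := hp
        rcases hor with ⟨h1, h2⟩ | ⟨h1, h2⟩
        · rw [Finset.mem_singleton] at h1 h2; subst h1; subst h2; exact hab
        · rw [Finset.mem_singleton] at h1 h2; subst h1; subst h2; exact G.symm _ _ hab
  have hne : {n | ∃ C : Finset (Finset V × Finset V),
      G.IsCover C ∧ (sjComponents C).card = n}.Nonempty := ⟨_, _, hfull, rfl⟩
  obtain ⟨C, hC, hCcard⟩ := Nat.sInf_mem hne
  have hstp_eq : G.stp = (sjComponents C).card := hCcard.symm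
  -- basic facts about C
  have hcomp1 : ∀ p ∈ C, p.1 ∈ sjComponents C :=
    fun p hp => Finset.mem_union_left _ (Finset.mem_image_of_mem _ hp)
  have hcomp2 : ∀ p ∈ C, p.2 ∈ sjComponents C :=
    fun p hp => Finset.mem_union_right _ (Finset.mem_image_of_mem _ hp)
  have hCadj : ∀ p ∈ C, ∀ a ∈ p.1, ∀ b ∈ p.2, G.Adj a b :=
    fun p hp a ha b hb => (hC.2 a b).mpr ⟨p, hp, Or.inl ⟨ha, hb⟩⟩
  have comp_nonempty : ∀ M ∈ sjComponents C, M.Nonempty := by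
    intro M hM
    obtain ⟨p, hp, hor⟩ := mem_sjComponents.mp hM
    rcases hor with h | h
    · exact h ▸ (hC.1 p hp).1
    · exact h ▸ (hC.1 p hp).2
  set S : Finset V := Finset.univ.filter (fun v => ({v} : Finset V) ∈ sjComponents C)
    with hSdef
  have hmemS : ∀ v, v ∈ S ↔ ({v} : Finset V) ∈ sjComponents C := by
    intro v; rw [hSdef, Finset.mem_filter]; simp
  have noC4 : ∀ a b : V, a ≠ b → ∀ M : Finset V, 2 ≤ M.card →
      (∀ m ∈ M, G.Adj a m) → (∀ m ∈ M, G.Adj b m) → False := by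
    intro a b hab M hM h1 h2
    obtain ⟨m1, hm1, m2, hm2, hm12⟩ := Finset.one_lt_card.mp hM
    exact hG ⟨a, b, m1, m2, hab, hm12, h1 m1 hm1, h1 m2 hm2, h2 m1 hm1, h2 m2 hm2⟩
  have hside : ∀ (A : Finset V) (x : V), A ∈ sjComponents C → x ∈ A → x ∉ S →
      ∃ y ∈ A, y ≠ x := by
    intro A x hA hx hxS
    by_contra hcon
    push_neg at hcon
    have hAx : A = {x} := Finset.eq_singleton_iff_unique_mem.mpr ⟨hx, hcon⟩
    exact hxS ((hmemS x).mpr (hAx ▸ hA))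
  have hedge_nonS : ∀ u v, u ∉ S → v ∉ S → G.Adj u v → False := by
    intro u v hu hv hadj
    obtain ⟨p, hp, hor⟩ := (hC.2 u v).mp hadj
    rcases hor with ⟨h1, h2⟩ | ⟨h1, h2⟩
    · obtain ⟨u', hu', hu'ne⟩ := hside p.1 u (hcomp1 p hp) h1 hu
      obtain ⟨v', hv', hv'ne⟩ := hside p.2 v (hcomp2 p hp) h2 hv
      exact hG ⟨u, u', v, v', Ne.symm hu'ne, Ne.symm hv'ne, hadj,
        hCadj p hp u h1 v' hv', hCadj p hp u' hu' v h2, hCadj p hp u' hu' v' hv'⟩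
    · obtain ⟨u', hu', hu'ne⟩ := hside p.2 u (hcomp2 p hp) h1 hu
      obtain ⟨v', hv', hv'ne⟩ := hside p.1 v (hcomp1 p hp) h2 hv
      exact hG ⟨u, u', v, v', Ne.symm hu'ne, Ne.symm hv'ne, hadj,
        G.symm _ _ (hCadj p hp v' hv' u h1), G.symm _ _ (hCadj p hp v h2 u' hu'),
        G.symm _ _ (hCadj p hp v' hv' u' hu')⟩
  set NS : Finset (Finset V) := (sjComponents C).filter (fun M => 2 ≤ M.card) with hNSdef
  have hNS2 : ∀ M ∈ NS, 2 ≤ M.card := by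
    intro M hM; rw [hNSdef, Finset.mem_filter] at hM; exact hM.2
  have hstar : ∀ v x, G.Adj v x → x ∉ S → ∃ M, M ∈ NS ∧ x ∈ M ∧ ∀ m ∈ M, G.Adj v m := by
    intro v x hadj hxS
    obtain ⟨p, hp, hor⟩ := (hC.2 v x).mp hadj
    have htwo : ∀ (A : Finset V), A ∈ sjComponents C → x ∈ A → 2 ≤ A.card := by
      intro A hA hx
      rcases Nat.lt_or_ge A.card 2 with h | h
      · exfalso
        have hpos : 0 < A.card := Finset.card_pos.mpr ⟨x, hx⟩
        have h1 : A.card = 1 := by omega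
        obtain ⟨a, ha⟩ := Finset.card_eq_one.mp h1
        rw [ha, Finset.mem_singleton] at hx
        rw [← hx] at ha
        exact hxS ((hmemS x).mpr (ha ▸ hA))
      · exact h
    rcases hor with ⟨h1, h2⟩ | ⟨h1, h2⟩
    · refine ⟨p.2, ?_, h2, fun m hm => hCadj p hp v h1 m hm⟩
      rw [hNSdef, Finset.mem_filter]
      exact ⟨hcomp2 p hp, htwo p.2 (hcomp2 p hp) h2⟩
    · refine ⟨p.1, ?_, h2, fun m hm => G.symm _ _ (hCadj p hp m hm v h1)⟩
      rw [hNSdef, Finset.mem_filter]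
      exact ⟨hcomp1 p hp, htwo p.1 (hcomp1 p hp) h2⟩
  have hSnbr : ∀ v ∈ S, ∃ y, G.Adj v y := by
    intro v hv
    obtain ⟨p, hp, hor⟩ := mem_sjComponents.mp ((hmemS v).mp hv)
    rcases hor with h | h
    · obtain ⟨y, hy⟩ := (hC.1 p hp).2
      have hv1 : v ∈ p.1 := by rw [h]; exact Finset.mem_singleton_self v
      exact ⟨y, hCadj p hp v hv1 y hy⟩
    · obtain ⟨y, hy⟩ := (hC.1 p hp).1
      have hv2 : v ∈ p.2 := by rw [h]; exact Finset.mem_singleton_self v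
      exact ⟨y, G.symm _ _ (hCadj p hp y hy v hv2)⟩
  -- the closure
  set Nbr : V → Finset V := fun v => Finset.univ.filter (fun y => G.Adj v y) with hNbrdef
  have hNbr : ∀ v y, y ∈ Nbr v ↔ G.Adj v y := by
    intro v y; rw [hNbrdef]; simp
  obtain ⟨T, w, hSsubT, hT1, hwspec, hwinj⟩ := exists_closure S Nbr
  -- the new cover
  set Big : Finset V := S.filter (fun v => (Nbr v \ T).Nonempty) with hBigdef
  set C' : Finset (Finset V × Finset V) :=
    Big.image (fun v => (({v} : Finset V), Nbr v \ T)) ∪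
    ((S ×ˢ T).filter (fun q => G.Adj q.1 q.2)).image
      (fun q => (({q.1} : Finset V), ({q.2} : Finset V))) with hC'def
  have hmemC' : ∀ p : Finset V × Finset V, p ∈ C' ↔
      (∃ v, v ∈ S ∧ (Nbr v \ T).Nonempty ∧ p = (({v} : Finset V), Nbr v \ T)) ∨
      (∃ a b, a ∈ S ∧ b ∈ T ∧ G.Adj a b ∧ p = (({a} : Finset V), ({b} : Finset V))) := by
    intro p
    rw [hC'def, Finset.mem_union]
    constructor
    · rintro (h | h)
      · obtain ⟨v, hv, rfl⟩ := Finset.mem_image.mp h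
        rw [hBigdef, Finset.mem_filter] at hv
        exact Or.inl ⟨v, hv.1, hv.2, rfl⟩
      · obtain ⟨q, hq, rfl⟩ := Finset.mem_image.mp h
        rw [Finset.mem_filter, Finset.mem_product] at hq
        exact Or.inr ⟨q.1, q.2, hq.1.1, hq.1.2, hq.2, rfl⟩
    · rintro (⟨v, hv1, hv2, rfl⟩ | ⟨a, b, h1, h2, h3, rfl⟩)
      · refine Or.inl (Finset.mem_image.mpr ⟨v, ?_, rfl⟩)
        rw [hBigdef, Finset.mem_filter]
        exact ⟨hv1, hv2⟩
      · refine Or.inr (Finset.mem_image.mpr ⟨(a, b), ?_, rfl⟩)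
        rw [Finset.mem_filter, Finset.mem_product]
        exact ⟨⟨h1, h2⟩, h3⟩
  have hsing : ∀ y : V, ({y} : Finset V) ∈ sjComponents C' ↔ y ∈ T := by
    intro y
    rw [mem_sjComponents]
    constructor
    · rintro ⟨p, hp, hor⟩
      rcases (hmemC' p).mp hp with ⟨v, hvS, hvne, rfl⟩ | ⟨a, b, haS, hbT, hab, rfl⟩
      · rcases hor with h | h
        · have : v = y := Finset.singleton_injective h
          exact this ▸ hSsubT hvS
        · exfalso
          apply hT1 v hvS
          have h' : Nbr v \ T = ({y} : Finset V) := h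
          rw [h']
          exact Finset.card_singleton y
      · rcases hor with h | h
        · have : a = y := Finset.singleton_injective h
          exact this ▸ hSsubT haS
        · have : b = y := Finset.singleton_injective h
          exact this ▸ hbT
    · intro hyT
      by_cases hyS : y ∈ S
      · obtain ⟨z, hz⟩ := hSnbr y hyS
        by_cases hzT : z ∈ T
        · exact ⟨({y}, {z}), (hmemC' _).mpr (Or.inr ⟨y, z, hyS, hzT, hz, rfl⟩), Or.inl rfl⟩
        · have hne2 : (Nbr y \ T).Nonempty :=
            ⟨z, Finset.mem_sdiff.mpr ⟨(hNbr y z).mpr hz, hzT⟩⟩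
          exact ⟨({y}, Nbr y \ T), (hmemC' _).mpr (Or.inl ⟨y, hyS, hne2, rfl⟩), Or.inl rfl⟩
      · obtain ⟨hwS, hwN, -⟩ := hwspec y (Finset.mem_sdiff.mpr ⟨hyT, hyS⟩)
        exact ⟨({w y}, {y}), (hmemC' _).mpr (Or.inr ⟨w y, y, hwS, hyT, (hNbr _ _).mp hwN, rfl⟩),
          Or.inr rfl⟩
  have hNstar' : ∀ v, Nstar G C' v = Nbr v \ T := by
    intro v
    ext y
    rw [Nstar, Finset.mem_filter, Finset.mem_sdiff, hNbr]
    simp only [Finset.mem_univ, true_and, hsing]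
  have hNone' : ∀ x y, y ∈ None' G C' x ↔ G.Adj x y ∧ y ∈ T := by
    intro x y
    rw [None', Finset.mem_filter]
    simp only [Finset.mem_univ, true_and, hsing]
  -- C' is a cover
  have hcov' : G.IsCover C' := by
    constructor
    · intro p hp
      rcases (hmemC' p).mp hp with ⟨v, hvS, hvne, rfl⟩ | ⟨a, b, -, -, -, rfl⟩
      · exact ⟨Finset.singleton_nonempty v, hvne⟩
      · exact ⟨Finset.singleton_nonempty a, Finset.singleton_nonempty b⟩
    · intro u v
      constructor
      · intro hadj
        by_cases huS : u ∈ S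
        · by_cases hvT : v ∈ T
          · exact ⟨({u}, {v}), (hmemC' _).mpr (Or.inr ⟨u, v, huS, hvT, hadj, rfl⟩),
              Or.inl ⟨Finset.mem_singleton_self u, Finset.mem_singleton_self v⟩⟩
          · have hv : v ∈ Nbr u \ T := Finset.mem_sdiff.mpr ⟨(hNbr u v).mpr hadj, hvT⟩
            exact ⟨({u}, Nbr u \ T), (hmemC' _).mpr (Or.inl ⟨u, huS, ⟨v, hv⟩, rfl⟩),
              Or.inl ⟨Finset.mem_singleton_self u, hv⟩⟩
        · have hvS : v ∈ S := by
            by_contra hvS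
            exact hedge_nonS u v huS hvS hadj
          by_cases huT : u ∈ T
          · exact ⟨({v}, {u}), (hmemC' _).mpr (Or.inr ⟨v, u, hvS, huT, G.symm _ _ hadj, rfl⟩),
              Or.inr ⟨Finset.mem_singleton_self u, Finset.mem_singleton_self v⟩⟩
          · have hu : u ∈ Nbr v \ T :=
              Finset.mem_sdiff.mpr ⟨(hNbr v u).mpr (G.symm _ _ hadj), huT⟩
            exact ⟨({v}, Nbr v \ T), (hmemC' _).mpr (Or.inl ⟨v, hvS, ⟨u, hu⟩, rfl⟩),
              Or.inr ⟨hu, Finset.mem_singleton_self v⟩⟩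
      · rintro ⟨p, hp, hor⟩
        rcases (hmemC' p).mp hp with ⟨v0, hv0S, -, rfl⟩ | ⟨a, b, -, -, hab, rfl⟩
        · rcases hor with ⟨h1, h2⟩ | ⟨h1, h2⟩
          · rw [Finset.mem_singleton] at h1
            subst h1
            exact (hNbr _ _).mp (Finset.mem_sdiff.mp h2).1
          · rw [Finset.mem_singleton] at h2
            subst h2
            exact G.symm _ _ ((hNbr _ _).mp (Finset.mem_sdiff.mp h1).1)
        · rcases hor with ⟨h1, h2⟩ | ⟨h1, h2⟩
          · rw [Finset.mem_singleton] at h1 h2; subst h1; subst h2; exact hab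
          · rw [Finset.mem_singleton] at h1 h2; subst h1; subst h2; exact G.symm _ _ hab
  -- counting
  have htag : ∀ v1 v2 M, M ∈ NS → (∀ m ∈ M, G.Adj v1 m) → (∀ m ∈ M, G.Adj v2 m) →
      v1 = v2 := by
    intro v1 v2 M hM h1 h2
    by_contra hne2
    exact noC4 v1 v2 hne2 M (hNS2 M hM) h1 h2
  have h1spec : ∀ u ∈ T \ S, ∃ M, M ∈ NS ∧ u ∈ M ∧ ∀ m ∈ M, G.Adj (w u) m := by
    intro u hu
    obtain ⟨hwS, hwN, -⟩ := hwspec u hu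
    exact hstar (w u) u ((hNbr _ _).mp hwN) (Finset.mem_sdiff.mp hu).2
  choose! f1 hf1NS hf1mem hf1adj using h1spec
  set Bigs : Finset (Finset V) := Big.image (fun v => Nbr v \ T) with hBigsdef
  have h2spec : ∀ B ∈ Bigs, ∃ v, v ∈ S ∧ Nbr v \ T = B ∧ B.Nonempty ∧
      ∃ M, M ∈ NS ∧ ∀ m ∈ M, G.Adj v m := by
    intro B hB
    rw [hBigsdef, Finset.mem_image] at hB
    obtain ⟨v, hv, hvB⟩ := hB
    rw [hBigdef, Finset.mem_filter] at hv
    obtain ⟨hvS, hvne⟩ := hv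
    obtain ⟨x, hx⟩ := hvne
    rcases Finset.mem_sdiff.mp hx with ⟨hx1, hx2⟩
    have hxS : x ∉ S := fun h => hx2 (hSsubT h)
    obtain ⟨M, hM, -, hMadj⟩ := hstar v x ((hNbr _ _).mp hx1) hxS
    exact ⟨v, hvS, hvB, hvB ▸ ⟨x, hx⟩, M, hM, hMadj⟩
  choose! tg htgS htgB htgNe f2 hf2NS hf2adj using h2spec
  have hinj1 : Set.InjOn f1 ↑(T \ S) := by
    intro u1 hu1 u2 hu2 heq
    have hu1' : u1 ∈ T \ S := hu1
    have hu2' : u2 ∈ T \ S := hu2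
    have hadj2 : ∀ m ∈ f1 u1, G.Adj (w u2) m := by
      rw [heq]; exact hf1adj u2 hu2'
    exact hwinj hu1 hu2 (htag (w u1) (w u2) (f1 u1) (hf1NS u1 hu1') (hf1adj u1 hu1') hadj2)
  have hinj2 : Set.InjOn f2 ↑Bigs := by
    intro B1 h1 B2 h2 heq
    have h1' : B1 ∈ Bigs := h1
    have h2' : B2 ∈ Bigs := h2
    have hadj2 : ∀ m ∈ f2 B1, G.Adj (tg B2) m := by
      rw [heq]; exact hf2adj B2 h2'
    have e := htag (tg B1) (tg B2) (f2 B1) (hf2NS B1 h1') (hf2adj B1 h1') hadj2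
    rw [← htgB B1 h1', ← htgB B2 h2', e]
  have hdisj12 : ∀ u ∈ T \ S, ∀ B ∈ Bigs, f1 u ≠ f2 B := by
    intro u hu B hB heq
    have hadj2 : ∀ m ∈ f1 u, G.Adj (tg B) m := by
      rw [heq]; exact hf2adj B hB
    have e := htag (w u) (tg B) (f1 u) (hf1NS u hu) (hf1adj u hu) hadj2
    obtain ⟨-, -, hw3⟩ := hwspec u hu
    rw [e, htgB B hB] at hw3
    exact (htgNe B hB).ne_empty hw3
  have himg : ((T \ S).image f1 ∪ Bigs.image f2) ⊆ NS := by
    intro M hM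
    rcases Finset.mem_union.mp hM with h | h
    · obtain ⟨u, hu, rfl⟩ := Finset.mem_image.mp h
      exact hf1NS u hu
    · obtain ⟨B, hB, rfl⟩ := Finset.mem_image.mp h
      exact hf2NS B hB
  have hdisj' : Disjoint ((T \ S).image f1) (Bigs.image f2) := by
    rw [Finset.disjoint_left]
    intro M h1 h2
    obtain ⟨u, hu, rfl⟩ := Finset.mem_image.mp h1
    obtain ⟨B, hB, hBeq⟩ := Finset.mem_image.mp h2
    exact hdisj12 u hu B hB hBeq.symm
  have hcount : (T \ S).card + Bigs.card ≤ NS.card := by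
    rw [← Finset.card_image_of_injOn hinj1, ← Finset.card_image_of_injOn hinj2,
      ← Finset.card_union_of_disjoint hdisj']
    exact Finset.card_le_card himg
  have hsplit : (sjComponents C).card = S.card + NS.card := by
    have h := Finset.card_filter_add_card_filter_not
      (s := sjComponents C) (p := fun M => 2 ≤ M.card)
    have hsmall : (sjComponents C).filter (fun M => ¬ 2 ≤ M.card) =
        S.image (fun v => ({v} : Finset V)) := by
      ext M
      simp only [Finset.mem_filter, Finset.mem_image]
      constructor
      · rintro ⟨hM, hMc⟩
        have hpos : 0 < M.card := Finset.card_pos.mpr (comp_nonempty M hM)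
        have h1 : M.card = 1 := by omega
        obtain ⟨a, rfl⟩ := Finset.card_eq_one.mp h1
        exact ⟨a, (hmemS a).mpr hM, rfl⟩
      · rintro ⟨a, ha, rfl⟩
        refine ⟨(hmemS a).mp ha, by simp⟩
    have hScard : (S.image (fun v => ({v} : Finset V))).card = S.card :=
      Finset.card_image_of_injective _ Finset.singleton_injective
    rw [hsmall, hScard, ← hNSdef] at h
    omega
  have hsub' : sjComponents C' ⊆ T.image (fun t => ({t} : Finset V)) ∪ Bigs := by
    intro M hM
    obtain ⟨p, hp, hor⟩ := mem_sjComponents.mp hM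
    rcases (hmemC' p).mp hp with ⟨v, hvS, hvne, rfl⟩ | ⟨a, b, haS, hbT, -, rfl⟩
    · rcases hor with h | h
      · exact Finset.mem_union_left _ (Finset.mem_image.mpr ⟨v, hSsubT hvS, h⟩)
      · refine Finset.mem_union_right _ ?_
        rw [hBigsdef]
        refine Finset.mem_image.mpr ⟨v, ?_, h⟩
        rw [hBigdef, Finset.mem_filter]
        exact ⟨hvS, hvne⟩
    · rcases hor with h | h
      · exact Finset.mem_union_left _ (Finset.mem_image.mpr ⟨a, hSsubT haS, h⟩)
      · exact Finset.mem_union_left _ (Finset.mem_image.mpr ⟨b, hbT, h⟩)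
  have hcard' : (sjComponents C').card ≤ (sjComponents C).card := by
    have h1 : (sjComponents C').card ≤
        (T.image (fun t => ({t} : Finset V)) ∪ Bigs).card := Finset.card_le_card hsub'
    have h2 : (T.image (fun t => ({t} : Finset V)) ∪ Bigs).card ≤
        (T.image (fun t => ({t} : Finset V))).card + Bigs.card := Finset.card_union_le _ _
    have h3 : (T.image (fun t => ({t} : Finset V))).card = T.card :=
      Finset.card_image_of_injective _ Finset.singleton_injective
    have h4 : (T \ S).card = T.card - S.card := Finset.card_sdiff_of_subset hSsubT
    have h5 : S.card ≤ T.card := Finset.card_le_card hSsubT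
    omega
  have hstp_le : G.stp ≤ (sjComponents C').card := Nat.sInf_le ⟨C', hcov', rfl⟩
  have hfinal : (sjComponents C').card = G.stp := by
    apply le_antisymm _ hstp_le
    rw [hstp_eq]
    exact hcard'
  refine ⟨C', hcov', hfinal, ?_⟩
  intro x
  by_cases hxS : x ∈ S
  · by_cases hx2 : 2 ≤ (Nbr x \ T).card
    · left
      refine ⟨by rw [hNstar' x]; exact hx2, ?_, ?_, ?_⟩
      · left
        rw [hNstar' x]
        exact (hmemC' _).mpr (Or.inl ⟨x, hxS, Finset.card_pos.mp (by omega), rfl⟩)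
      · intro v hv
        obtain ⟨hadj, hvT⟩ := (hNone' x v).mp hv
        exact Or.inl ((hmemC' _).mpr (Or.inr ⟨x, v, hxS, hvT, hadj, rfl⟩))
      · intro p hp hxp
        rcases (hmemC' p).mp hp with ⟨v, hvS, hvne, rfl⟩ | ⟨a, b, haS, hbT, hab, rfl⟩
        · rcases hxp with h | h
          · have hv : v = x := (Finset.mem_singleton.mp h).symm
            subst hv
            left
            rw [hNstar' v]
          · exfalso
            exact (Finset.mem_sdiff.mp h).2 (hSsubT hxS)
        · rcases hxp with h | h
          · have ha : a = x := (Finset.mem_singleton.mp h).symm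
            subst ha
            exact Or.inr (Or.inr ⟨b, (hNone' a b).mpr ⟨hab, hbT⟩, Or.inl rfl⟩)
          · have hb : b = x := (Finset.mem_singleton.mp h).symm
            subst hb
            exact Or.inr (Or.inr ⟨a, (hNone' b a).mpr ⟨G.symm _ _ hab, hSsubT haS⟩,
              Or.inr rfl⟩)
    · right; left
      have hempty : Nbr x \ T = ∅ := by
        have hne1 := hT1 x hxS
        exact Finset.card_eq_zero.mp (by omega)
      refine ⟨by rw [hNstar' x, hempty], ?_, ?_⟩
      · intro v hv
        obtain ⟨hadj, hvT⟩ := (hNone' x v).mp hv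
        exact Or.inl ((hmemC' _).mpr (Or.inr ⟨x, v, hxS, hvT, hadj, rfl⟩))
      · intro p hp hxp
        rcases (hmemC' p).mp hp with ⟨v, hvS, hvne, rfl⟩ | ⟨a, b, haS, hbT, hab, rfl⟩
        · exfalso
          rcases hxp with h | h
          · have hv : v = x := (Finset.mem_singleton.mp h).symm
            subst hv
            rw [hempty] at hvne
            exact Finset.not_nonempty_empty hvne
          · exact (Finset.mem_sdiff.mp h).2 (hSsubT hxS)
        · rcases hxp with h | h
          · have ha : a = x := (Finset.mem_singleton.mp h).symm
            subst ha
            exact ⟨b, (hNone' a b).mpr ⟨hab, hbT⟩, Or.inl rfl⟩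
          · have hb : b = x := (Finset.mem_singleton.mp h).symm
            subst hb
            exact ⟨a, (hNone' b a).mpr ⟨G.symm _ _ hab, hSsubT haS⟩, Or.inr rfl⟩
  · by_cases hxT : x ∈ T
    · right; left
      have hempty : Nbr x \ T = ∅ := by
        apply Finset.eq_empty_iff_forall_notMem.mpr
        intro y hy
        rcases Finset.mem_sdiff.mp hy with ⟨hy1, hy2⟩
        exact hedge_nonS x y hxS (fun h => hy2 (hSsubT h)) ((hNbr _ _).mp hy1)
      refine ⟨by rw [hNstar' x, hempty], ?_, ?_⟩
      · intro v hv
        obtain ⟨hadj, hvT⟩ := (hNone' x v).mp hv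
        have hvS : v ∈ S := by
          by_contra h
          exact hedge_nonS x v hxS h hadj
        exact Or.inr ((hmemC' _).mpr (Or.inr ⟨v, x, hvS, hxT, G.symm _ _ hadj, rfl⟩))
      · intro p hp hxp
        rcases (hmemC' p).mp hp with ⟨v, hvS, hvne, rfl⟩ | ⟨a, b, haS, hbT, hab, rfl⟩
        · exfalso
          rcases hxp with h | h
          · have hv : v = x := (Finset.mem_singleton.mp h).symm
            subst hv
            exact hxS hvS
          · exact (Finset.mem_sdiff.mp h).2 hxT
        · rcases hxp with h | h
          · exfalso
            have ha : a = x := (Finset.mem_singleton.mp h).symm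
            subst ha
            exact hxS haS
          · have hb : b = x := (Finset.mem_singleton.mp h).symm
            subst hb
            exact ⟨a, (hNone' b a).mpr ⟨G.symm _ _ hab, hSsubT haS⟩, Or.inr rfl⟩
    · right; right
      refine ⟨fun h => hxT ((hsing x).mp h), ?_, ?_⟩
      · intro v hadj
        have hvS : v ∈ S := by
          by_contra h
          exact hedge_nonS x v hxS h hadj
        have hne2 : (Nbr v \ T).Nonempty :=
          ⟨x, Finset.mem_sdiff.mpr ⟨(hNbr _ _).mpr (G.symm _ _ hadj), hxT⟩⟩
        refine Or.inr ?_
        rw [hNstar' v]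
        exact (hmemC' _).mpr (Or.inl ⟨v, hvS, hne2, rfl⟩)
      · intro p hp hxp
        rcases (hmemC' p).mp hp with ⟨v, hvS, hvne, rfl⟩ | ⟨a, b, haS, hbT, hab, rfl⟩
        · rcases hxp with h | h
          · exfalso
            have hv : v = x := (Finset.mem_singleton.mp h).symm
            subst hv
            exact hxS hvS
          · have hadj : G.Adj x v :=
              G.symm _ _ ((hNbr _ _).mp (Finset.mem_sdiff.mp h).1)
            refine ⟨v, hadj, Or.inr ?_⟩
            rw [hNstar' v]
        · exfalso
          rcases hxp with h | h
          · exact hxS ((Finset.mem_singleton.mp h) ▸ haS)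
          · exact hxT ((Finset.mem_singleton.mp h) ▸ hbT)
end

section
/- For every simple graph G with at least 2 vertices and every v ∈ V(G): gap(G(v)) − 1 ≤ gap(G) ≤ gap(G(v)) + 1, where G(v) denotes G with v (and all incident edges) removed. -/
open LoopGraph

set_option linter.unusedSectionVars false

section Aux
variable {V : Type*} [Fintype V] [DecidableEq V]

open Classical in
lemma aux_exists_cover (G : LoopGraph V) : ∃ C, G.IsCover C := by
  refine ⟨((Finset.univ : Finset (V × V)).filter (fun p => G.Adj p.1 p.2)).image
    (fun p => ({p.1}, {p.2})), ?_, ?_⟩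
  · intro p hp
    simp only [Finset.mem_image] at hp
    obtain ⟨q, _, rfl⟩ := hp
    exact ⟨Finset.singleton_nonempty _, Finset.singleton_nonempty _⟩
  · intro u w
    constructor
    · intro h
      exact ⟨({u}, {w}), Finset.mem_image.2 ⟨(u, w), by simp [h], rfl⟩,
        Or.inl ⟨by simp, by simp⟩⟩
    · rintro ⟨p, hp, h⟩
      simp only [Finset.mem_image, Finset.mem_filter] at hp
      obtain ⟨q, ⟨_, hq⟩, rfl⟩ := hp
      rcases h with ⟨h1, h2⟩ | ⟨h1, h2⟩ <;>
        simp only [Finset.mem_singleton] at h1 h2 <;> subst h1 <;> subst h2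
      · exact hq
      · exact G.symm _ _ hq

lemma aux_stp_le (G : LoopGraph V) (C : Finset (Finset V × Finset V))
    (h : G.IsCover C) : G.stp ≤ (sjComponents C).card :=
  Nat.sInf_le ⟨C, h, rfl⟩

lemma aux_stp_spec (G : LoopGraph V) :
    ∃ C, G.IsCover C ∧ (sjComponents C).card = G.stp := by
  obtain ⟨C, hC⟩ := aux_exists_cover G
  have : G.stp ∈ {n | ∃ C : Finset (Finset V × Finset V),
      G.IsCover C ∧ (sjComponents C).card = n} :=
    Nat.sInf_mem ⟨_, C, hC, rfl⟩
  exact this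

lemma aux_stp_induce_le (G : LoopGraph V) (s : Finset V) :
    (G.induce s).stp ≤ G.stp := by
  classical
  obtain ⟨C, hC, hcard⟩ := aux_stp_spec G
  set f : Finset V → Finset {x // x ∈ s} := fun K => K.subtype (· ∈ s) with hf
  set C' := (C.image (fun p => (f p.1, f p.2))).filter
      (fun q => q.1.Nonempty ∧ q.2.Nonempty) with hC'
  have hcov : (G.induce s).IsCover C' := by
    constructor
    · intro p hp
      exact (Finset.mem_filter.1 hp).2
    · intro u w
      constructor
      · intro h
        obtain ⟨p, hp, hcase⟩ := (hC.2 u.val w.val).1 h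
        refine ⟨(f p.1, f p.2), ?_, ?_⟩
        · refine Finset.mem_filter.2 ⟨Finset.mem_image.2 ⟨p, hp, rfl⟩, ?_⟩
          rcases hcase with ⟨h1, h2⟩ | ⟨h1, h2⟩
          · exact ⟨⟨u, Finset.mem_subtype.2 h1⟩, ⟨w, Finset.mem_subtype.2 h2⟩⟩
          · exact ⟨⟨w, Finset.mem_subtype.2 h2⟩, ⟨u, Finset.mem_subtype.2 h1⟩⟩
        · rcases hcase with ⟨h1, h2⟩ | ⟨h1, h2⟩
          · exact Or.inl ⟨Finset.mem_subtype.2 h1, Finset.mem_subtype.2 h2⟩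
          · exact Or.inr ⟨Finset.mem_subtype.2 h1, Finset.mem_subtype.2 h2⟩
      · rintro ⟨q, hq, hcase⟩
        obtain ⟨p, hp, rfl⟩ := Finset.mem_image.1 (Finset.mem_filter.1 hq).1
        refine (hC.2 u.val w.val).2 ⟨p, hp, ?_⟩
        rcases hcase with ⟨h1, h2⟩ | ⟨h1, h2⟩
        · exact Or.inl ⟨Finset.mem_subtype.1 h1, Finset.mem_subtype.1 h2⟩
        · exact Or.inr ⟨Finset.mem_subtype.1 h1, Finset.mem_subtype.1 h2⟩
  have hsub : sjComponents C' ⊆ (sjComponents C).image f := by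
    intro K hK
    simp only [sjComponents, Finset.mem_union, Finset.mem_image] at hK ⊢
    rcases hK with ⟨q, hq, rfl⟩ | ⟨q, hq, rfl⟩ <;>
      obtain ⟨p, hp, rfl⟩ := Finset.mem_image.1 (Finset.mem_filter.1 hq).1
    · exact ⟨p.1, Or.inl ⟨p, hp, rfl⟩, rfl⟩
    · exact ⟨p.2, Or.inr ⟨p, hp, rfl⟩, rfl⟩
  calc (G.induce s).stp ≤ (sjComponents C').card := aux_stp_le _ _ hcov
    _ ≤ ((sjComponents C).image f).card := Finset.card_le_card hsub
    _ ≤ (sjComponents C).card := Finset.card_image_le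
    _ = G.stp := hcard

open Classical in
lemma aux_stp_le_induce (G : LoopGraph V) (v : V) :
    G.stp ≤ (G.induce ({v}ᶜ : Finset V)).stp + 2 := by
  classical
  set s : Finset V := {v}ᶜ with hs
  obtain ⟨C', hC', hcard⟩ := aux_stp_spec (G.induce s)
  set g : Finset {x // x ∈ s} → Finset V := fun K => K.image Subtype.val with hg
  set N : Finset V := Finset.univ.filter (fun w => G.Adj v w) with hN
  have hmem_s : ∀ u : V, u ∈ s ↔ u ≠ v := by
    intro u; simp [hs]
  have hmem_g : ∀ (K : Finset {x // x ∈ s}) (u : V),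
      u ∈ g K ↔ ∃ h : u ∈ s, (⟨u, h⟩ : {x // x ∈ s}) ∈ K := by
    intro K u
    simp only [hg, Finset.mem_image]
    constructor
    · rintro ⟨a, ha, rfl⟩; exact ⟨a.2, ha⟩
    · rintro ⟨h, ha⟩; exact ⟨⟨u, h⟩, ha, rfl⟩
  -- the lifted cover
  set D : Finset (Finset V × Finset V) := C'.image (fun p => (g p.1, g p.2)) with hD
  have hDedge : ∀ u w : V, (∃ p ∈ D, (u ∈ p.1 ∧ w ∈ p.2) ∨ (u ∈ p.2 ∧ w ∈ p.1)) ↔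
      (∃ (hu : u ∈ s) (hw : w ∈ s), G.Adj u w) := by
    intro u w
    constructor
    · rintro ⟨p, hp, hcase⟩
      obtain ⟨q, hq, rfl⟩ := Finset.mem_image.1 hp
      rcases hcase with ⟨h1, h2⟩ | ⟨h1, h2⟩
      · obtain ⟨hu, hq1⟩ := (hmem_g _ _).1 h1
        obtain ⟨hw, hq2⟩ := (hmem_g _ _).1 h2
        exact ⟨hu, hw, ((hC'.2 ⟨u, hu⟩ ⟨w, hw⟩).2 ⟨q, hq, Or.inl ⟨hq1, hq2⟩⟩)⟩
      · obtain ⟨hu, hq1⟩ := (hmem_g _ _).1 h1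
        obtain ⟨hw, hq2⟩ := (hmem_g _ _).1 h2
        exact ⟨hu, hw, ((hC'.2 ⟨u, hu⟩ ⟨w, hw⟩).2 ⟨q, hq, Or.inr ⟨hq1, hq2⟩⟩)⟩
    · rintro ⟨hu, hw, hadj⟩
      obtain ⟨q, hq, hcase⟩ := (hC'.2 ⟨u, hu⟩ ⟨w, hw⟩).1 hadj
      refine ⟨(g q.1, g q.2), Finset.mem_image.2 ⟨q, hq, rfl⟩, ?_⟩
      rcases hcase with ⟨h1, h2⟩ | ⟨h1, h2⟩
      · exact Or.inl ⟨(hmem_g _ _).2 ⟨hu, h1⟩, (hmem_g _ _).2 ⟨hw, h2⟩⟩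
      · exact Or.inr ⟨(hmem_g _ _).2 ⟨hu, h1⟩, (hmem_g _ _).2 ⟨hw, h2⟩⟩
  have hDsj : (sjComponents D).card ≤ (G.induce s).stp := by
    have hsub : sjComponents D ⊆ (sjComponents C').image g := by
      intro K hK
      simp only [sjComponents, Finset.mem_union, Finset.mem_image, hD] at hK ⊢
      rcases hK with ⟨q, ⟨p, hp, rfl⟩, rfl⟩ | ⟨q, ⟨p, hp, rfl⟩, rfl⟩
      · exact ⟨p.1, Or.inl ⟨p, hp, rfl⟩, rfl⟩
      · exact ⟨p.2, Or.inr ⟨p, hp, rfl⟩, rfl⟩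
    calc (sjComponents D).card ≤ ((sjComponents C').image g).card :=
          Finset.card_le_card hsub
      _ ≤ (sjComponents C').card := Finset.card_image_le
      _ = (G.induce s).stp := hcard
  by_cases hNe : N.Nonempty
  · -- add the pair ({v}, N)
    have hcov : G.IsCover (D ∪ {({v}, N)}) := by
      constructor
      · intro p hp
        rcases Finset.mem_union.1 hp with hp | hp
        · obtain ⟨q, hq, rfl⟩ := Finset.mem_image.1 hp
          obtain ⟨h1, h2⟩ := hC'.1 q hq
          exact ⟨h1.image _, h2.image _⟩
        · rw [Finset.mem_singleton] at hp
          subst hp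
          exact ⟨Finset.singleton_nonempty _, hNe⟩
      · intro u w
        constructor
        · intro hadj
          by_cases huv : u = v
          · subst huv
            refine ⟨({u}, N), Finset.mem_union_right _ (Finset.mem_singleton_self _),
              Or.inl ⟨Finset.mem_singleton_self _, ?_⟩⟩
            simp [hN, hadj]
          · by_cases hwv : w = v
            · subst hwv
              refine ⟨({w}, N), Finset.mem_union_right _ (Finset.mem_singleton_self _),
                Or.inr ⟨?_, Finset.mem_singleton_self _⟩⟩
              simp [hN, G.symm _ _ hadj]
            · obtain ⟨p, hp, hc⟩ := (hDedge u w).2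
                ⟨(hmem_s u).2 huv, (hmem_s w).2 hwv, hadj⟩
              exact ⟨p, Finset.mem_union_left _ hp, hc⟩
        · rintro ⟨p, hp, hcase⟩
          rcases Finset.mem_union.1 hp with hp | hp
          · obtain ⟨_, _, h⟩ := (hDedge u w).1 ⟨p, hp, hcase⟩
            exact h
          · rw [Finset.mem_singleton] at hp
            subst hp
            rcases hcase with ⟨h1, h2⟩ | ⟨h1, h2⟩
            · rw [Finset.mem_singleton] at h1; subst h1
              simpa [hN] using h2
            · rw [Finset.mem_singleton] at h2; subst h2
              exact G.symm _ _ (by simpa [hN] using h1)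
    have h2 : sjComponents (D ∪ {({v}, N)}) ⊆ sjComponents D ∪ {({v} : Finset V), N} := by
      intro K hK
      simp only [sjComponents, Finset.image_union, Finset.mem_union, Finset.mem_image,
        Finset.mem_singleton, Finset.mem_insert] at hK ⊢
      rcases hK with (h | ⟨p, hp, rfl⟩) | (h | ⟨p, hp, rfl⟩)
      · exact Or.inl (Or.inl h)
      · subst hp; exact Or.inr (Or.inl rfl)
      · exact Or.inl (Or.inr h)
      · subst hp; exact Or.inr (Or.inr rfl)
    calc G.stp ≤ (sjComponents (D ∪ {({v}, N)})).card := aux_stp_le _ _ hcov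
      _ ≤ (sjComponents D ∪ {({v} : Finset V), N}).card := Finset.card_le_card h2
      _ ≤ (sjComponents D).card + ({({v} : Finset V), N} : Finset (Finset V)).card :=
          Finset.card_union_le _ _
      _ ≤ (sjComponents D).card + 2 := by
          have := Finset.card_insert_le ({v} : Finset V) ({N} : Finset (Finset V))
          simp only [Finset.card_singleton] at this
          omega
      _ ≤ (G.induce s).stp + 2 := by omega
  · -- N empty: D itself covers G
    have hNempty : N = ∅ := Finset.not_nonempty_iff_eq_empty.1 hNe
    have hcov : G.IsCover D := by
      constructor
      · intro p hp
        obtain ⟨q, hq, rfl⟩ := Finset.mem_image.1 hp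
        obtain ⟨h1, h2⟩ := hC'.1 q hq
        exact ⟨h1.image _, h2.image _⟩
      · intro u w
        rw [hDedge u w]
        constructor
        · intro hadj
          have huv : u ≠ v := by
            rintro rfl
            have : w ∈ N := by simp [hN, hadj]
            simp [hNempty] at this
          have hwv : w ≠ v := by
            rintro rfl
            have : u ∈ N := by simp [hN, G.symm _ _ hadj]
            simp [hNempty] at this
          exact ⟨(hmem_s u).2 huv, (hmem_s w).2 hwv, hadj⟩
        · rintro ⟨_, _, h⟩; exact h
    calc G.stp ≤ (sjComponents D).card := aux_stp_le _ _ hcov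
      _ ≤ (G.induce s).stp := hDsj
      _ ≤ (G.induce s).stp + 2 := by omega

end Aux

/-- For every graph `G` with at least 2 vertices and every
vertex `v`: `gap (G(v)) − 1 ≤ gap G ≤ gap (G(v)) + 1` (stated subtraction-free). -/
theorem stmt_11 {V : Type*} [Fintype V] [DecidableEq V] (G : LoopGraph V)
    (h2 : 2 ≤ Fintype.card V) (v : V) :
    G.gap ≤ (G.induce ({v}ᶜ : Finset V)).gap + 1 ∧
    (G.induce ({v}ᶜ : Finset V)).gap ≤ G.gap + 1 := by
  classical
  have h1 := aux_stp_induce_le G ({v}ᶜ : Finset V)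
  have h2 := aux_stp_le_induce G v
  have hc : Fintype.card {x // x ∈ ({v}ᶜ : Finset V)} = Fintype.card V - 1 := by
    rw [Fintype.card_coe, Finset.card_compl, Finset.card_singleton]
  constructor <;> simp only [gap, hc] <;> omega
end
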